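/- arXiv:1302.5692 — 6 statements merged into one kernel-verified Lean document; each statement's English description precedes it below -/
import Mathlib

section
/- Let 𝒰 be an age and let 𝒞 ⊆ 𝒰 be a Fraïssé class whose Fraïssé limit is locally finite and has an oligomorphic automorphism group. Let T be a countable structure whose age is contained in 𝒰, and let u : U → T be a universal homogeneous homomorphism to T within 𝒞̄. If Aut(T) is oligomorphic, then Aut(U) is oligomorphic. -/
universe u v w

open FirstOrder FirstOrder.Language CategoryTheory

namespace UHomog

variable (L : FirstOrder.Language.{u, v})

/-- The class `𝒞̄` of countable structures whose age is contained in `K`. -/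
def InBar (K : Set (Bundled.{w} L.Structure)) (A : Type w) [L.Structure A] : Prop :=
  Countable A ∧ L.age A ⊆ K

/-- A homomorphism `u : U → T` is universal within `𝒞̄ = K̄` if every homomorphism from a member
of `K̄` to `T` factors through an embedding into `U`. -/
def IsUniversalHom (K : Set (Bundled.{w} L.Structure)) {U T : Type w}
    [L.Structure U] [L.Structure T] (u : U →[L] T) : Prop :=
  ∀ A : Bundled.{w} L.Structure, InBar L K A → ∀ h : A →[L] T,
    ∃ ι : A ↪[L] U, ∀ a : A, u (ι a) = h a

/-- A homomorphism `u : U → T` is homogeneous if every embedding of a finitely generated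
substructure of `U` into `U` compatible with `u` extends to an automorphism of `U` compatible
with `u`. -/
def IsHomogeneousHom {U T : Type w} [L.Structure U] [L.Structure T] (u : U →[L] T) : Prop :=
  ∀ S : L.Substructure U, S.FG → ∀ ι : S ↪[L] U,
    (∀ s : S, u (ι s) = u s) →
    ∃ α : U ≃[L] U, (∀ x : U, u (α x) = u x) ∧ ∀ s : S, α s = ι s

/-- An age: a class of finitely generated structures with countably many isomorphism types,
closed under isomorphism, with the hereditary property and the joint embedding property. -/
def IsAge (K : Set (Bundled.{w} L.Structure)) : Prop :=
  K.Nonempty ∧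
  (∀ M : Bundled.{w} L.Structure, M ∈ K → Structure.FG L M) ∧
  (∀ M N : Bundled.{w} L.Structure, Nonempty (M ≃[L] N) → (M ∈ K ↔ N ∈ K)) ∧
  (∃ S : Set (Bundled.{w} L.Structure), S.Countable ∧
    ∀ M ∈ K, ∃ N ∈ S, Nonempty (M ≃[L] N)) ∧
  Hereditary K ∧ JointEmbedding K

/-- The square `g₁ ∘ f₁ = g₂ ∘ f₂` is a pushout square in the category of countable structures
with age contained in `K`, with homomorphisms as morphisms. -/
def IsPushoutSquare (K : Set (Bundled.{w} L.Structure)) {A B₁ B₂ C : Type w}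
    [L.Structure A] [L.Structure B₁] [L.Structure B₂] [L.Structure C]
    (f₁ : A ↪[L] B₁) (f₂ : A ↪[L] B₂) (g₁ : B₁ →[L] C) (g₂ : B₂ →[L] C) : Prop :=
  g₁.comp f₁.toHom = g₂.comp f₂.toHom ∧
  ∀ D : Bundled.{w} L.Structure, InBar L K D → ∀ (k₁ : B₁ →[L] D) (k₂ : B₂ →[L] D),
    k₁.comp f₁.toHom = k₂.comp f₂.toHom →
    ∃! m : C →[L] D, m.comp g₁ = k₁ ∧ m.comp g₂ = k₂

/-- A strict Fraïssé class: a Fraïssé class in which every span of embeddings can be completed to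
a canonical (pushout) amalgam. -/
def IsStrictFraisse (K : Set (Bundled.{w} L.Structure)) : Prop :=
  IsFraisse K ∧
  ∀ A B₁ B₂ : Bundled.{w} L.Structure, A ∈ K → B₁ ∈ K → B₂ ∈ K →
    ∀ (f₁ : A ↪[L] B₁) (f₂ : A ↪[L] B₂),
      ∃ (C : Bundled.{w} L.Structure) (g₁ : B₁ →[L] C) (g₂ : B₂ →[L] C),
        C ∈ K ∧ IsPushoutSquare L K f₁ f₂ g₁ g₂

/-- A Fraïssé class `K₀` is free in the strict Fraïssé class `K` if it is closed with respect to
canonical (pushout) amalgams in `K`. -/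
def IsFreeIn (K₀ K : Set (Bundled.{w} L.Structure)) : Prop :=
  K₀ ⊆ K ∧
  ∀ A B₁ B₂ : Bundled.{w} L.Structure, A ∈ K₀ → B₁ ∈ K₀ → B₂ ∈ K₀ →
    ∀ (f₁ : A ↪[L] B₁) (f₂ : A ↪[L] B₂),
      ∃ (C : Bundled.{w} L.Structure) (g₁ : B₁ →[L] C) (g₂ : B₂ →[L] C),
        C ∈ K₀ ∧ IsPushoutSquare L K f₁ f₂ g₁ g₂

/-- The amalgamated extension property. -/
def AmalgamatedExtension (K : Set (Bundled.{w} L.Structure)) : Prop :=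
  ∀ A B₁ B₂ T : Bundled.{w} L.Structure, A ∈ K → B₁ ∈ K → B₂ ∈ K → T ∈ K →
    ∀ (f₁ : A ↪[L] B₁) (f₂ : A ↪[L] B₂) (h₁ : B₁ →[L] T) (h₂ : B₂ →[L] T),
      h₁.comp f₁.toHom = h₂.comp f₂.toHom →
      ∃ (C T' : Bundled.{w} L.Structure) (g₁ : B₁ ↪[L] C) (g₂ : B₂ ↪[L] C)
        (k : T ↪[L] T') (h : C →[L] T'),
        C ∈ K ∧ T' ∈ K ∧ g₁.comp f₁ = g₂.comp f₂ ∧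
        h.comp g₁.toHom = k.toHom.comp h₁ ∧ h.comp g₂.toHom = k.toHom.comp h₂

/-- The homo amalgamation property (HAP). -/
def HAP (K : Set (Bundled.{w} L.Structure)) : Prop :=
  ∀ A B₁ B₂ : Bundled.{w} L.Structure, A ∈ K → B₁ ∈ K → B₂ ∈ K →
    ∀ (f₁ : A ↪[L] B₁) (f₂ : A →[L] B₂),
      ∃ (C : Bundled.{w} L.Structure) (g₁ : B₁ →[L] C) (g₂ : B₂ ↪[L] C),
        C ∈ K ∧ g₁.comp f₁.toHom = g₂.toHom.comp f₂

/-- A homomorphism `r : A → B` is a retraction if it has a section. -/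
def IsRetraction {A B : Type w} [L.Structure A] [L.Structure B] (r : A →[L] B) : Prop :=
  ∃ ι : B →[L] A, ∀ b : B, r (ι b) = b

end UHomog

namespace UHomog

variable (L : FirstOrder.Language.{u, v})

open FirstOrder FirstOrder.Language in
/-- The automorphism group of `M` is oligomorphic: for each `n ≥ 1` there are only finitely many
orbits of `n`-tuples under automorphisms. -/
def AutOligomorphic (M : Type w) [L.Structure M] : Prop :=
  ∀ n : ℕ, 0 < n → ∃ S : Set (Fin n → M), S.Finite ∧
    ∀ x : Fin n → M, ∃ y ∈ S, ∃ g : M ≃[L] M, ∀ i, g (x i) = y i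

open FirstOrder FirstOrder.Language in
/-- A structure is locally finite if all its finitely generated substructures are finite. -/
def LocallyFinite (M : Type w) [L.Structure M] : Prop :=
  ∀ S : L.Substructure M, S.FG → Finite S

end UHomog

/-!
Up to `Aut(U)`, a tuple `x` of `U` is determined by two pieces of data, each ranging over a finite
set: the `Aut(Flim)`-orbit of the image of `x` under an embedding of the substructure `⟨x⟩` into
the Fraïssé limit (which exists as `age U ⊆ K = age Flim`), and the `Aut(T)`-orbit of `u ∘ x`.
If `x` and `y` share these data, there is an isomorphism `⟨x⟩ ≃ ⟨y⟩` sending `x` to `y`, and it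
lifts along `u` some automorphism `g` of `T`. Universality of `u` provides an embedding `U ↪ U`
lifting `g`, and homogeneity of `u` corrects it to extend any finitely generated partial lift of
`g`; hence partial lifts of `g` can be extended by one point on either side, and a back-and-forth
argument turns `⟨x⟩ ≃ ⟨y⟩` into an automorphism of `U`.
-/

namespace UHomog

open FirstOrder FirstOrder.Language Substructure PartialEquiv

variable {L : FirstOrder.Language.{u, v}}

section BackAndForth

variable {M N : Type*} [L.Structure M] [L.Structure N]

theorem le_toPartialEquiv_iff {f : M ≃ₚ[L] N} {e : M ↪[L] N} :
    f ≤ e.toPartialEquiv ↔ ∀ s : f.dom, e s = f.toEmbedding s :=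
  ⟨fun ⟨_, h⟩ s => DFunLike.congr_fun h s, fun h => ⟨le_top, Embedding.ext h⟩⟩

theorem exists_equiv_of_forth_of_back [Countable M] [Countable N] (P : Set (M ≃ₚ[L] N))
    (forth : ∀ f ∈ P, ∀ m : M, ∃ f' ∈ P, f ≤ f' ∧ m ∈ f'.dom)
    (back : ∀ f ∈ P, ∀ n : N, ∃ f' ∈ P, f ≤ f' ∧ n ∈ f'.cod) {f : M ≃ₚ[L] N} (hf : f ∈ P) :
    ∃ α : M ≃[L] N, f ≤ α.toEmbedding.toPartialEquiv := by
  have : Encodable (M ⊕ N) := Encodable.ofCountable _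
  let D : M ⊕ N → Order.Cofinal P := fun
    | .inl m => ⟨{f' | m ∈ f'.1.dom}, fun f' => by
        obtain ⟨f'', hf'', hle, hm⟩ := forth f'.1 f'.2 m
        exact ⟨⟨f'', hf''⟩, hm, hle⟩⟩
    | .inr n => ⟨{f' | n ∈ f'.1.cod}, fun f' => by
        obtain ⟨f'', hf'', hle, hn⟩ := back f'.1 f'.2 n
        exact ⟨⟨f'', hf''⟩, hn, hle⟩⟩
  let S : ℕ →o M ≃ₚ[L] N :=
    ⟨Subtype.val ∘ Order.sequenceOfCofinals ⟨f, hf⟩ D,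
      (Subtype.mono_coe _).comp (Order.sequenceOfCofinals.monotone _ _)⟩
  have le_limit (i : M ⊕ N) := DirectLimit.le_partialEquivLimit S (Encodable.encode i + 1)
  have dom_top : (DirectLimit.partialEquivLimit S).dom = ⊤ := eq_top_iff.2 fun m _ =>
    dom_le_dom (le_limit (.inl m)) (Order.sequenceOfCofinals.encode_mem _ D (.inl m))
  have cod_top : (DirectLimit.partialEquivLimit S).cod = ⊤ := eq_top_iff.2 fun n _ =>
    cod_le_cod (le_limit (.inr n)) (Order.sequenceOfCofinals.encode_mem _ D (.inr n))
  refine ⟨toEquivOfEqTop dom_top cod_top, ?_⟩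
  rw [toEquivOfEqTop_toEmbedding, Embedding.toPartialEquiv_toEmbedding]
  exact DirectLimit.le_partialEquivLimit S 0

end BackAndForth

section PartialLift

variable {U T : Type w} [L.Structure U] [L.Structure T] {u : U →[L] T} {g : T ≃[L] T}

def IsPartialLift (u : U →[L] T) (g : T ≃[L] T) (f : U ≃ₚ[L] U) : Prop :=
  ∀ s : f.dom, u (f.toEmbedding s) = g (u s)

theorem IsPartialLift.symm {f : U ≃ₚ[L] U} (hf : IsPartialLift u g f) :
    IsPartialLift u g.symm f.symm := fun (t : f.cod) => by
  have h := hf (f.toEquiv.symm t)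
  rw [toEmbedding_apply, f.toEquiv.apply_symm_apply t] at h
  rw [h, g.symm_apply_apply]
  rfl

theorem exists_embedding_extending {K : Set (Bundled.{w} L.Structure)} (hU : InBar L K U)
    (huniv : IsUniversalHom L K u) (hhomog : IsHomogeneousHom L u) {S : L.Substructure U}
    (hS : S.FG) (ι : S ↪[L] U) (hι : ∀ s : S, u (ι s) = g (u s)) :
    ∃ e : U ↪[L] U, (∀ a, u (e a) = g (u a)) ∧ ∀ s : S, e s = ι s := by
  obtain ⟨j, hj⟩ := huniv ⟨U, _⟩ hU (g.toHom.comp u)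
  replace hj : ∀ a, u (j a) = g (u a) := hj
  let q := j.substructureEquivMap S
  have hq (s : S) : (q s : U) = j s := j.substructureEquivMap_apply S s
  -- `j` lifts `g` along `u`, so `ι ∘ j⁻¹` on `j(S)` commutes with `u` and homogeneity extends it.
  obtain ⟨α, hαu, hαι⟩ := hhomog (S.map j.toHom) (hS.map _) (ι.comp q.symm.toEmbedding)
    (q.surjective.forall.2 fun s => by simp [hq, hι, hj])
  refine ⟨α.toEmbedding.comp j, fun a => by simp [hαu, hj], fun s => ?_⟩
  simpa [hq] using hαι (q s)

theorem IsPartialLift.exists_le_mem_dom {K : Set (Bundled.{w} L.Structure)} (hU : InBar L K U)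
    (huniv : IsUniversalHom L K u) (hhomog : IsHomogeneousHom L u) {f : U ≃ₚ[L] U}
    (hfg : f.dom.FG) (hf : IsPartialLift u g f) (m : U) :
    ∃ f' : U ≃ₚ[L] U, (f'.dom.FG ∧ IsPartialLift u g f') ∧ f ≤ f' ∧ m ∈ f'.dom := by
  obtain ⟨e, heu, hef⟩ := exists_embedding_extending hU huniv hhomog hfg f.toEmbedding hf
  let A := closure L {m} ⊔ f.dom
  refine ⟨e.toPartialEquiv.domRestrict (le_top : A ≤ ⊤), ⟨(fg_closure_singleton m).sup hfg,
    fun s => heu s⟩, le_domRestrict _ _ le_sup_right _ (le_toPartialEquiv_iff.2 hef),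
    le_sup_left (a := closure L {m}) (subset_closure (Set.mem_singleton m))⟩

theorem IsPartialLift.exists_le_mem_cod {K : Set (Bundled.{w} L.Structure)} (hU : InBar L K U)
    (huniv : IsUniversalHom L K u) (hhomog : IsHomogeneousHom L u) {f : U ≃ₚ[L] U}
    (hfg : f.dom.FG) (hf : IsPartialLift u g f) (m : U) :
    ∃ f' : U ≃ₚ[L] U, (f'.dom.FG ∧ IsPartialLift u g f') ∧ f ≤ f' ∧ m ∈ f'.cod := by
  obtain ⟨f', ⟨hfg', hf'⟩, hle, hm⟩ :=
    hf.symm.exists_le_mem_dom hU huniv hhomog (f.dom_fg_iff_cod_fg.1 hfg) m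
  exact ⟨f'.symm, ⟨f'.dom_fg_iff_cod_fg.1 hfg', hf'.symm⟩, symm_le_iff.1 hle, hm⟩

theorem exists_equiv_extending {K : Set (Bundled.{w} L.Structure)} [Countable U]
    (hU : InBar L K U) (huniv : IsUniversalHom L K u) (hhomog : IsHomogeneousHom L u)
    {S : L.Substructure U} (hS : S.FG) (ι : S ↪[L] U) (hι : ∀ s : S, u (ι s) = g (u s)) :
    ∃ α : U ≃[L] U, ∀ s : S, α s = ι s := by
  let P := {f : U ≃ₚ[L] U | f.dom.FG ∧ IsPartialLift u g f}
  obtain ⟨α, hα⟩ := exists_equiv_of_forth_of_back P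
    (fun _ ⟨hfg, hf⟩ => hf.exists_le_mem_dom hU huniv hhomog hfg)
    (fun _ ⟨hfg, hf⟩ => hf.exists_le_mem_cod hU huniv hhomog hfg)
    (f := ⟨S, ι.toHom.range, ι.equivRange⟩) ⟨hS, hι⟩
  exact ⟨α, le_toPartialEquiv_iff.1 hα⟩

end PartialLift

section GeneratedTuple

variable {ι M N P : Type*} [L.Structure M] [L.Structure N] [L.Structure P]

def tupleInClosure (x : ι → M) (i : ι) : closure L (Set.range x) :=
  ⟨x i, subset_closure (Set.mem_range_self i)⟩

@[simp]
theorem coe_tupleInClosure (x : ι → M) (i : ι) : (tupleInClosure (L := L) x i : M) = x i :=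
  rfl

theorem closure_range_tupleInClosure (x : ι → M) :
    closure L (Set.range (tupleInClosure (L := L) x)) = ⊤ := by
  apply map_injective_of_injective (f := (subtype (closure L (Set.range x))).toHom)
    (subtype _).injective
  rw [map_closure, ← Hom.range_eq_map, range_subtype, ← Set.range_comp]
  rfl

theorem range_eq_closure_range_comp_tupleInClosure (x : ι → M)
    (e : closure L (Set.range x) →[L] P) :
    e.range = closure L (Set.range (e ∘ tupleInClosure x)) := by
  rw [Hom.range_eq_map, ← closure_range_tupleInClosure, map_closure, ← Set.range_comp]

theorem exists_embedding_comp_eq_of_range_le (k : M ↪[L] P) (k' : N ↪[L] P)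
    (h : k.toHom.range ≤ k'.toHom.range) : ∃ φ : M ↪[L] N, ∀ a, k' (φ a) = k a :=
  ⟨k'.equivRange.symm.toEmbedding.comp
      ((Substructure.inclusion h).comp k.equivRange.toEmbedding),
    fun a => (k'.equivRange_apply _).symm.trans (by simp)⟩

end GeneratedTuple

theorem exists_finite_orbit_reps_of_invariant {ι M β : Type*} [L.Structure M] {S : Set β}
    (hS : S.Finite) (inv : (ι → M) → β) (hinvS : ∀ x, inv x ∈ S)
    (hinv : ∀ x y, inv x = inv y → ∃ g : M ≃[L] M, ∀ i, g (x i) = y i) :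
    ∃ R : Set (ι → M), R.Finite ∧ ∀ x : ι → M, ∃ y ∈ R, ∃ g : M ≃[L] M, ∀ i, g (x i) = y i := by
  rcases isEmpty_or_nonempty (ι → M) with _ | _
  · exact ⟨∅, Set.finite_empty, isEmptyElim⟩
  exact ⟨Function.invFun inv '' S, hS.image _, fun x => ⟨_, Set.mem_image_of_mem _ (hinvS x),
    hinv _ _ (Function.invFun_eq ⟨x, rfl⟩).symm⟩⟩

theorem exists_equiv_apply_eq_of_embeddings_agree {ι P : Type*} {U T : Type w} [L.Structure P]
    [L.Structure U] [L.Structure T] [Countable U] [Finite ι] {K : Set (Bundled.{w} L.Structure)}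
    {u : U →[L] T} (hU : InBar L K U) (huniv : IsUniversalHom L K u)
    (hhomog : IsHomogeneousHom L u) {x y : ι → U}
    (k : closure L (Set.range x) ↪[L] P) (k' : closure L (Set.range y) ↪[L] P)
    (hk : ∀ i, k (tupleInClosure x i) = k' (tupleInClosure y i))
    (g : T ≃[L] T) (hg : ∀ i, g (u (x i)) = u (y i)) :
    ∃ α : U ≃[L] U, ∀ i, α (x i) = y i := by
  have hrange : k.toHom.range = k'.toHom.range := by
    rw [range_eq_closure_range_comp_tupleInClosure,
      range_eq_closure_range_comp_tupleInClosure]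
    congr 2
    exact funext hk
  obtain ⟨φ, hφ⟩ := exists_embedding_comp_eq_of_range_le k k' hrange.le
  have hφx (i : ι) : φ (tupleInClosure x i) = tupleInClosure y i :=
    k'.injective ((hφ _).trans (hk i))
  let ψ := (subtype _).comp φ
  have hψ : u.comp ψ.toHom = (g.toHom.comp u).comp (subtype _).toHom :=
    Hom.eq_of_eqOn_dense (closure_range_tupleInClosure x) (by
      rintro _ ⟨i, rfl⟩
      simp [ψ, hφx, hg])
  obtain ⟨α, hα⟩ := exists_equiv_extending hU huniv hhomog (fg_closure (Set.finite_range x)) ψ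
    (DFunLike.congr_fun hψ)
  exact ⟨α, fun i => (hα (tupleInClosure x i)).trans (congrArg Subtype.val (hφx i))⟩

end UHomog

open FirstOrder.Language.Substructure

open UHomog FirstOrder FirstOrder.Language in
theorem statement5_general
    (L : FirstOrder.Language.{u, v})
    [Countable (Σ l, L.Functions l)]
    (K : Set (Bundled.{w} L.Structure))
    (Flim : Type w) [L.Structure Flim] [Countable Flim]
    (hFlim : IsFraisseLimit K Flim)
    (holig : AutOligomorphic L Flim)
    (T : Type w) [L.Structure T]
    (U : Type w) [L.Structure U] (hU : InBar L K U)
    (u : U →[L] T) (huniv : IsUniversalHom L K u) (hhomog : IsHomogeneousHom L u)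
    (hTolig : AutOligomorphic L T) :
    AutOligomorphic L U := by
  have : Countable U := hU.1
  intro n hn
  obtain ⟨SF, hSF, hFrep⟩ := holig n hn
  obtain ⟨ST, hST, hTrep⟩ := hTolig n hn
  have hinv (x : Fin n → U) : ∃ p ∈ SF ×ˢ ST, ∃ (k : closure L (Set.range x) ↪[L] Flim)
      (g : T ≃[L] T), (∀ i, k (tupleInClosure x i) = p.1 i) ∧ ∀ i, g (u (x i)) = p.2 i := by
    have hage : Bundled.mk (closure L (Set.range x)) ∈ L.age Flim := by
      rw [hFlim.age]
      exact hU.2 (age.fg_substructure (fg_closure (Set.finite_range x)))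
    obtain ⟨-, ⟨e⟩⟩ := hage
    obtain ⟨z, hz, h, hh⟩ := hFrep (e ∘ tupleInClosure x)
    obtain ⟨t, ht, g, hg⟩ := hTrep (u ∘ x)
    exact ⟨(z, t), ⟨hz, ht⟩, h.toEmbedding.comp e, g, hh, hg⟩
  choose inv hinvS k g hk hg using hinv
  refine exists_finite_orbit_reps_of_invariant (L := L) (hSF.prod hST) inv hinvS
    fun x y hxy => ?_
  refine exists_equiv_apply_eq_of_embeddings_agree hU huniv hhomog (k x) (k y) (fun i => ?_)
    ((g y).symm.comp (g x)) (fun i => ?_)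
  · rw [hk, hk, hxy]
  · rw [Equiv.comp_apply, hg, hxy, ← hg y i, (g y).symm_apply_apply]

open UHomog FirstOrder FirstOrder.Language in
/-- Proposition: if `K ⊆ 𝒰` is a Fraïssé class whose Fraïssé limit is locally finite with
oligomorphic automorphism group, `T ∈ 𝒰̄`, and `u : U → T` is a universal homogeneous
homomorphism within `K̄`, then oligomorphy of `Aut(T)` implies oligomorphy of `Aut(U)`. -/
theorem statement5
    (L : FirstOrder.Language.{u, v})
    [Countable (Σ l, L.Functions l)] [Countable (Σ l, L.Relations l)]
    (𝒰 K : Set (Bundled.{w} L.Structure))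
    (h𝒰 : IsAge L 𝒰) (hK : IsFraisse K) (hsub : K ⊆ 𝒰)
    (Flim : Type w) [L.Structure Flim] [Countable Flim]
    (hFlim : IsFraisseLimit K Flim)
    (hlf : LocallyFinite L Flim) (holig : AutOligomorphic L Flim)
    (T : Type w) [L.Structure T] (hT : InBar L 𝒰 T)
    (U : Type w) [L.Structure U] (hU : InBar L K U)
    (u : U →[L] T) (huniv : IsUniversalHom L K u) (hhomog : IsHomogeneousHom L u)
    (hTolig : AutOligomorphic L T) :
    AutOligomorphic L U :=
  statement5_general L K Flim hFlim holig T U hU u huniv hhomog hTolig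
end

section
/- Let 𝒞 be a Fraïssé class with Fraïssé limit U, and let T ∈ 𝒞̄. Then there exists a universal homogeneous retraction r : U ↠ T if and only if both of the following hold: (1) for all A,B₁,B₂ ∈ 𝒞, embeddings f₁ : A ↪ B₁, f₂ : A ↪ B₂ and homomorphisms h₁ : B₁ → T, h₂ : B₂ → T with h₁ ∘ f₁ = h₂ ∘ f₂, there exist C ∈ 𝒞, embeddings g₁ : B₁ ↪ C, g₂ : B₂ ↪ C and a homomorphism h : C → T such that g₁ ∘ f₁ = g₂ ∘ f₂, h ∘ g₁ = h₁ and h ∘ g₂ = h₂; and (2) for all A,B ∈ 𝒞, every embedding ι : A ↪ B and every homomorphism h : A → T there exists a homomorphism ĥ : B → T with ĥ ∘ ι = h. -/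
universe u v w

open FirstOrder FirstOrder.Language CategoryTheory

/-!
Forward direction: realize `B₁` and `B₂` over `T` inside `U` by universality; homogeneity of `r`
moves the copy of `B₁` until it agrees with the copy of `B₂` on `A`, and the substructure generated
by the two copies is the amalgam. Condition (2) comes from realizing `A` over `T` in `U` and
extending that embedding to `B` by ultrahomogeneity of `U`.

Converse: call `r` rich if every extension `e : S ↪ B`, `h : B → T` (with `B ∈ K`) of the
restriction of `r` to a finitely generated `S ≤ U` is realized inside `U` over `S` and over `T`.
A rich `r` is universal and homogeneous by a back-and-forth argument through finitely generated
partial isomorphisms intertwining the maps to `T`. A rich `r` is the union of a chain of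
homomorphisms from finitely generated substructures of `U` to `T`: condition (2) enlarges their
domains, condition (1) together with the extension property of `U` realizes one extension at a
time, and countably many extensions suffice. Universality applied to `1_T` gives a section of `r`.
-/

namespace UHomog

open Structure Substructure

variable {L : FirstOrder.Language.{u, v}}

-- `⊥` is generated by `∅` also as a structure in its own right.
theorem bot_hom_ext {M N : Type w} [L.Structure M] [L.Structure N]
    (f g : (⊥ : L.Substructure M) →[L] N) : f = g := by
  refine Hom.eq_of_eqOn_dense (s := ∅) (eq_top_iff.2 fun x _ => ?_) (by simp)
  have hx : (x : M) ∈ ((closure L (∅ : Set (⊥ : L.Substructure M))).map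
      (⊥ : L.Substructure M).subtype.toHom) := by
    rw [Substructure.map_closure, Set.image_empty, Substructure.closure_empty]
    exact x.2
  obtain ⟨y, hy, hyx⟩ := hx
  rwa [← Subtype.ext hyx]

section

variable {K : Set (Bundled.{w} L.Structure)} {U T : Type w} [L.Structure U] [L.Structure T]

variable (K T) in
def AmalgamationOver : Prop :=
  ∀ A B₁ B₂ : Bundled.{w} L.Structure, A ∈ K → B₁ ∈ K → B₂ ∈ K →
    ∀ (f₁ : A ↪[L] B₁) (f₂ : A ↪[L] B₂) (h₁ : B₁ →[L] T) (h₂ : B₂ →[L] T),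
      h₁.comp f₁.toHom = h₂.comp f₂.toHom →
      ∃ C : Bundled.{w} L.Structure, C ∈ K ∧
        ∃ (g₁ : B₁ ↪[L] C) (g₂ : B₂ ↪[L] C) (h : C →[L] T),
          g₁.comp f₁ = g₂.comp f₂ ∧ h.comp g₁.toHom = h₁ ∧ h.comp g₂.toHom = h₂

variable (K T) in
def HomExtensionOver : Prop :=
  ∀ A B : Bundled.{w} L.Structure, A ∈ K → B ∈ K →
    ∀ (ι : A ↪[L] B) (h : A →[L] T), ∃ hext : B →[L] T, hext.comp ι.toHom = h

theorem IsHomogeneousHom.exists_comp_eq {r : U →[L] T} (hr : IsHomogeneousHom L r)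
    {A : Type w} [L.Structure A] (hA : FG L A) (e e' : A ↪[L] U)
    (hee' : ∀ a, r (e' a) = r (e a)) :
    ∃ α : U ≃[L] U, (∀ x, r (α x) = r x) ∧ ∀ a, α (e a) = e' a := by
  obtain ⟨α, hαr, hα⟩ := hr e.toHom.range (hA.range e.toHom)
    (e'.comp e.equivRange.symm.toEmbedding) (fun s => by
      obtain ⟨a, rfl⟩ := e.equivRange.surjective s
      simp [hee'])
  exact ⟨α, hαr, fun a => by simpa using hα (e.equivRange a)⟩

theorem IsUniversalHom.isRetraction {r : U →[L] T} (hT : InBar L K T)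
    (huniv : IsUniversalHom L K r) : IsRetraction L r :=
  let ⟨ι, hι⟩ := huniv ⟨T, _⟩ hT (Hom.id L T)
  ⟨ι.toHom, hι⟩

section Intertwining

variable {A : Type w} [L.Structure A]

noncomputable def partialEquivOfEmbedding {S : L.Substructure A} (f : S ↪[L] U) : A ≃ₚ[L] U :=
  ⟨S, f.toHom.range, f.equivRange⟩

def Intertwines (r : U →[L] T) (h : A →[L] T) (f : A ≃ₚ[L] U) : Prop :=
  ∀ x : f.dom, r (f.toEquiv x) = h x

theorem intertwines_partialEquivOfEmbedding {r : U →[L] T} {h : A →[L] T}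
    {S : L.Substructure A} {f : S ↪[L] U} (hf : ∀ x, r (f x) = h x) :
    Intertwines r h (partialEquivOfEmbedding f) := fun x => by
  rw [← hf x]
  exact congrArg r (f.equivRange_apply x)

theorem Intertwines.symm {r : U →[L] T} {f : U ≃ₚ[L] U} (hf : Intertwines r r f) :
    Intertwines r r f.symm := fun y => by
  have := hf (f.toEquiv.symm y)
  rw [show f.toEquiv (f.toEquiv.symm y) = y from f.toEquiv.apply_symm_apply y] at this
  exact this.symm

theorem exists_intertwines_of_cofinal {r : U →[L] T} {h : A →[L] T} {ι : Type*} [Countable ι]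
    (f₀ : {f : L.FGEquiv A U // Intertwines r h f.1})
    (D : ι → Order.Cofinal {f : L.FGEquiv A U // Intertwines r h f.1}) :
    ∃ F : A ≃ₚ[L] U, f₀.1.1 ≤ F ∧ Intertwines r h F ∧
      ∀ i, ∃ f ∈ D i, f.1.1 ≤ F := by
  have := Encodable.ofCountable ι
  let S : ℕ →o A ≃ₚ[L] U := ⟨fun n => (Order.sequenceOfCofinals f₀ D n).1.1,
    fun _ _ hmn => Order.sequenceOfCofinals.monotone f₀ D hmn⟩
  refine ⟨DirectLimit.partialEquivLimit S, DirectLimit.le_partialEquivLimit S 0, fun x => ?_,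
    fun i => ⟨_, Order.sequenceOfCofinals.encode_mem f₀ D i,
      DirectLimit.le_partialEquivLimit S _⟩⟩
  obtain ⟨n, hn⟩ :=
    (mem_iSup_of_directed (PartialEquiv.monotone_dom.comp S.monotone).directed_le).1 x.2
  have hSn :=
    PartialEquiv.toEquiv_inclusion_apply (DirectLimit.le_partialEquivLimit S n) ⟨x, hn⟩
  rw [← (Order.sequenceOfCofinals f₀ D n).2 ⟨x, hn⟩]
  exact congrArg (fun y : (DirectLimit.partialEquivLimit S).cod => r y) hSn

end Intertwining

variable (K) in
def IsRich (r : U →[L] T) : Prop :=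
  ∀ S : L.Substructure U, S.FG → ∀ B : Bundled.{w} L.Structure, B ∈ K →
    ∀ (e : S ↪[L] B) (h : B →[L] T), (∀ x, h (e x) = r x) →
      ∃ j : B ↪[L] U, (∀ x, j (e x) = x) ∧ ∀ b, r (j b) = h b

theorem IsRich.exists_intertwines_mem_dom {r : U →[L] T} (hr : IsRich K r) {A : Type w}
    [L.Structure A] (hA : L.age A ⊆ K) {h : A →[L] T}
    (f : {f : L.FGEquiv A U // Intertwines r h f.1}) (a : A) :
    ∃ g : {f : L.FGEquiv A U // Intertwines r h f.1}, a ∈ g.1.1.dom ∧ f ≤ g := by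
  obtain ⟨⟨f, hfg⟩, hf⟩ := f
  let S := f.dom ⊔ closure L {a}
  have hS : S.FG := hfg.sup (fg_closure_singleton a)
  obtain ⟨j, hje, hjr⟩ := hr f.cod (f.dom_fg_iff_cod_fg.1 hfg) ⟨S, _⟩
    (hA (age.fg_substructure hS))
    ((Substructure.inclusion le_sup_left).comp f.toEquiv.symm.toEmbedding) (h.comp S.subtype.toHom)
    fun y => by simpa using (hf (f.toEquiv.symm y)).symm
  refine ⟨⟨⟨partialEquivOfEmbedding j, hS⟩, intertwines_partialEquivOfEmbedding hjr⟩,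
    (le_sup_right : _ ≤ S) (subset_closure rfl), le_sup_left, Embedding.ext fun x => ?_⟩
  have := hje (f.toEquiv x)
  simp only [Embedding.comp_apply, FirstOrder.Language.Equiv.coe_toEmbedding,
    FirstOrder.Language.Equiv.symm_apply_apply] at this
  exact (j.equivRange_apply _).trans this

structure PartialHom (L : FirstOrder.Language.{u, v}) (M T : Type w) [L.Structure M]
    [L.Structure T] where
  dom : L.Substructure M
  toHom : dom →[L] T

namespace PartialHom

variable {M : Type w} [L.Structure M]

instance : Preorder (PartialHom L M T) where
  le p q := ∃ h : p.dom ≤ q.dom, ∀ x, q.toHom (Substructure.inclusion h x) = p.toHom x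
  le_refl _ := ⟨le_rfl, fun _ => rfl⟩
  le_trans _ _ _ := fun ⟨hpq, epq⟩ ⟨hqs, eqs⟩ =>
    ⟨hpq.trans hqs, fun x => (eqs _).trans (epq x)⟩

section Limit

variable (S : ℕ →o PartialHom L M T) (hS : ∀ x, ∃ n, x ∈ (S n).dom)

theorem apply_eq_of_mem {m n : ℕ} {x : M} (hm : x ∈ (S m).dom) (hn : x ∈ (S n).dom) :
    (S m).toHom ⟨x, hm⟩ = (S n).toHom ⟨x, hn⟩ :=
  ((S.monotone (le_max_left m n)).2 ⟨x, hm⟩).symm.trans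
    ((S.monotone (le_max_right m n)).2 ⟨x, hn⟩)

include hS in
theorem exists_forall_mem_dom {k : ℕ} (xs : Fin k → M) : ∃ n, ∀ i, xs i ∈ (S n).dom :=
  ⟨Finset.univ.sup fun i => (hS (xs i)).choose, fun i =>
    (S.monotone (Finset.le_sup (Finset.mem_univ i))).1 (hS (xs i)).choose_spec⟩

noncomputable def limit : M →[L] T where
  toFun x := (S (hS x).choose).toHom ⟨x, (hS x).choose_spec⟩
  map_fun' {k} F xs := by
    obtain ⟨n, hn⟩ := exists_forall_mem_dom S hS xs
    rw [apply_eq_of_mem S _ ((S n).dom.fun_mem F xs hn)]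
    refine ((S n).toHom.map_fun F fun i => ⟨xs i, hn i⟩).trans (congrArg _ (funext fun i => ?_))
    exact apply_eq_of_mem S _ _
  map_rel' {k} R xs hR := by
    obtain ⟨n, hn⟩ := exists_forall_mem_dom S hS xs
    convert (S n).toHom.map_rel R (fun i => ⟨xs i, hn i⟩) hR using 2
    exact funext fun i => apply_eq_of_mem S _ _

theorem limit_apply {n : ℕ} (x : (S n).dom) : limit S hS x = (S n).toHom x :=
  apply_eq_of_mem S _ _

end Limit

noncomputable def ofEmbedding {C : Type w} [L.Structure C] (c : C ↪[L] M) (k : C →[L] T) :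
    PartialHom L M T :=
  ⟨c.toHom.range, k.comp c.equivRange.symm.toHom⟩

theorem ofEmbedding_apply {C : Type w} [L.Structure C] (c : C ↪[L] M) (k : C →[L] T) (x : C) :
    (ofEmbedding c k).toHom (c.equivRange x) = k x :=
  congrArg k (c.equivRange.symm_apply_apply x)

theorem le_ofEmbedding {C : Type w} [L.Structure C] {c : C ↪[L] M} {k : C →[L] T}
    {p : PartialHom L M T} (g : p.dom ↪[L] C) (hc : ∀ x, c (g x) = x)
    (hk : ∀ x, k (g x) = p.toHom x) : p ≤ ofEmbedding c k := by
  refine ⟨fun x hx => ⟨g ⟨x, hx⟩, hc ⟨x, hx⟩⟩, fun x => ?_⟩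
  rw [← hk, ← ofEmbedding_apply c]
  exact congrArg _ (Subtype.ext (hc x).symm)

-- An extension `(e, h)` incompatible with `p` counts as realized.
def Realizes (p : PartialHom L M T) {S : L.Substructure M} {B : Type w} [L.Structure B]
    (e : S ↪[L] B) (h : B →[L] T) : Prop :=
  ∃ hS : S ≤ p.dom, (∀ x, h (e x) = p.toHom (Substructure.inclusion hS x)) →
    ∃ j : B ↪[L] p.dom, (∀ x, j (e x) = Substructure.inclusion hS x) ∧
      ∀ b, p.toHom (j b) = h b

theorem Realizes.exists_embedding {p : PartialHom L M T} {S : L.Substructure M} {B : Type w}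
    [L.Structure B] {e : S ↪[L] B} {h : B →[L] T} (hp : p.Realizes e h) {r : M →[L] T}
    (hr : ∀ x : p.dom, r x = p.toHom x) (hc : ∀ x, h (e x) = r x) :
    ∃ j : B ↪[L] M, (∀ x, j (e x) = x) ∧ ∀ b, r (j b) = h b :=
  let ⟨_, hp⟩ := hp
  let ⟨j, hje, hjh⟩ := hp fun x => (hc x).trans (hr (Substructure.inclusion _ x))
  ⟨p.dom.subtype.comp j, fun x => congrArg Subtype.val (hje x),
    fun b => (hr (j b)).trans (hjh b)⟩

end PartialHom

section FraisseLimit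

variable [Countable (Σ l, L.Functions l)] [Countable U] (hU : IsFraisseLimit K U)
include hU

theorem fg_of_mem {B : Bundled.{w} L.Structure} (hB : B ∈ K) :
    FG L B :=
  (hU.age ▸ hB : B ∈ L.age U).1

theorem inBar_of_mem {B : Bundled.{w} L.Structure} (hB : B ∈ K) :
    InBar L K B :=
  ⟨cg_iff_countable.1 (fg_of_mem hU hB).cg,
    hU.age ▸ (hU.age ▸ hB : B ∈ L.age U).2.some.age_subset_age⟩

theorem mk_mem_of_fg {S : L.Substructure U} (hS : S.FG) :
    Bundled.mk S ∈ K :=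
  hU.age ▸ age.fg_substructure hS

theorem exists_embedding_comp_eq {A : Type w} [L.Structure A]
    (hA : FG L A) {B : Bundled.{w} L.Structure} (hB : B ∈ K) (e : A ↪[L] U) (ι : A ↪[L] B) :
    ∃ e' : B ↪[L] U, e'.comp ι = e := by
  have : Nonempty (B ↪[L] U) := (hU.age ▸ hB : B ∈ L.age U).2
  obtain ⟨e', he'⟩ := hU.ultrahomogeneous.extend_embedding hA e ι
  exact ⟨e', he'.symm⟩

theorem IsUniversalHom.amalgamationOver {r : U →[L] T}
    (huniv : IsUniversalHom L K r) (hhom : IsHomogeneousHom L r) : AmalgamationOver K T := by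
  intro A B₁ B₂ hA hB₁ hB₂ f₁ f₂ h₁ h₂ hh
  obtain ⟨e₁, he₁⟩ := huniv B₁ (inBar_of_mem hU hB₁) h₁
  obtain ⟨e₂, he₂⟩ := huniv B₂ (inBar_of_mem hU hB₂) h₂
  obtain ⟨α, hαr, hα⟩ :=
    hhom.exists_comp_eq (fg_of_mem hU hA) (e₁.comp f₁) (e₂.comp f₂)
    (fun a => by simpa [he₁, he₂] using congr($hh.symm a))
  let E₁ := α.toEmbedding.comp e₁
  let C := E₁.toHom.range ⊔ e₂.toHom.range
  refine ⟨Bundled.mk C, mk_mem_of_fg hU (((fg_of_mem hU hB₁).range _).sup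
      ((fg_of_mem hU hB₂).range _)),
    E₁.codRestrict C fun b => (le_sup_left : _ ≤ C) (Hom.mem_range_self _ b),
    e₂.codRestrict C fun b => (le_sup_right : _ ≤ C) (Hom.mem_range_self _ b),
    r.comp C.subtype.toHom, ?_, ?_, ?_⟩ <;> ext x
  · exact hα x
  · simp [E₁, hαr, he₁]
  · simp [he₂]

theorem IsUniversalHom.homExtensionOver {r : U →[L] T}
    (huniv : IsUniversalHom L K r) : HomExtensionOver K T := by
  intro A B hA hB ι h
  obtain ⟨e, he⟩ := huniv A (inBar_of_mem hU hA) h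
  obtain ⟨e', rfl⟩ := exists_embedding_comp_eq hU (fg_of_mem hU hA) hB e ι
  exact ⟨r.comp e'.toHom, Hom.ext fun a => he a⟩

theorem IsRich.isUniversalHom {r : U →[L] T} (hr : IsRich K r) : IsUniversalHom L K r := by
  intro A hA h
  have := hA.1
  obtain ⟨-, ⟨q⟩⟩ := (hU.age ▸ hA.2 (age.fg_substructure fg_bot) :
    Bundled.mk (⊥ : L.Substructure A) ∈ L.age U)
  let f₀ : {f : L.FGEquiv A U // Intertwines r h f.1} :=
    ⟨⟨partialEquivOfEmbedding q, fg_bot⟩, intertwines_partialEquivOfEmbedding fun x =>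
      congr($(bot_hom_ext (r.comp q.toHom) (h.comp (Substructure.subtype _).toHom)) x)⟩
  obtain ⟨F, -, hF, hD⟩ := exists_intertwines_of_cofinal f₀ fun a : A =>
    ⟨{f | a ∈ f.1.1.dom}, fun f => hr.exists_intertwines_mem_dom hA.2 f a⟩
  have hdom : F.dom = ⊤ := eq_top_iff.2 fun a _ =>
    let ⟨_, hf, hfF⟩ := hD a; PartialEquiv.dom_le_dom hfF hf
  exact ⟨PartialEquiv.toEmbeddingOfEqTop hdom, fun a => by
    rw [PartialEquiv.toEmbeddingOfEqTop_apply]; exact hF _⟩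

theorem IsRich.isHomogeneousHom {r : U →[L] T} (hr : IsRich K r) : IsHomogeneousHom L r := by
  intro S hS ι hι
  have hK : L.age U ⊆ K := hU.age.le
  let P := {f : L.FGEquiv U U // Intertwines r r f.1}
  let D : U ⊕ U → Order.Cofinal P
    | .inl m => ⟨{f | m ∈ f.1.1.dom}, fun f => hr.exists_intertwines_mem_dom hK f m⟩
    | .inr m => ⟨{f | m ∈ f.1.1.cod}, fun f => by
        obtain ⟨g, hm, hfg⟩ := hr.exists_intertwines_mem_dom hK ⟨f.1.symm, f.2.symm⟩ m
        exact ⟨⟨g.1.symm, g.2.symm⟩, hm, PartialEquiv.symm_le_iff.1 hfg⟩⟩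
  obtain ⟨F, hιF, hF, hD⟩ := exists_intertwines_of_cofinal
    ⟨⟨partialEquivOfEmbedding ι, hS⟩, intertwines_partialEquivOfEmbedding hι⟩ D
  have hdom : F.dom = ⊤ := eq_top_iff.2 fun m _ =>
    let ⟨_, hf, hfF⟩ := hD (.inl m); PartialEquiv.dom_le_dom hfF hf
  have hcod : F.cod = ⊤ := eq_top_iff.2 fun m _ =>
    let ⟨_, hf, hfF⟩ := hD (.inr m); PartialEquiv.cod_le_cod hfF hf
  let α := PartialEquiv.toEquivOfEqTop hdom hcod
  have hα : ∀ x, α x = F.toEquiv ⟨x, hdom ▸ mem_top x⟩ := fun x => by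
    rw [← PartialEquiv.toEmbeddingOfEqTop_apply hdom,
      ← PartialEquiv.toEquivOfEqTop_toEmbedding hdom hcod]
    rfl
  refine ⟨α, fun x => by rw [hα]; exact hF _, fun s => ?_⟩
  rw [hα]
  exact congrArg Subtype.val (PartialEquiv.toEquiv_inclusion_apply hιF s)

theorem PartialHom.exists_le_and_le_dom (H2 : HomExtensionOver K T) {p : PartialHom L U T}
    (hp : p.dom.FG) {V : L.Substructure U} (hV : V.FG) :
    ∃ q : PartialHom L U T, q.dom.FG ∧ V ≤ q.dom ∧ p ≤ q := by
  obtain ⟨k, hk⟩ := H2 (Bundled.mk p.dom) (Bundled.mk ↥(p.dom ⊔ V)) (mk_mem_of_fg hU hp)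
    (mk_mem_of_fg hU (hp.sup hV)) (Substructure.inclusion le_sup_left) p.toHom
  exact ⟨⟨p.dom ⊔ V, k⟩, hp.sup hV, le_sup_right, le_sup_left, fun x => congr($hk x)⟩

theorem PartialHom.exists_le_realizes (H1 : AmalgamationOver K T) (H2 : HomExtensionOver K T)
    {p : PartialHom L U T} (hp : p.dom.FG) {S : L.Substructure U} (hS : S.FG)
    {B : Bundled.{w} L.Structure} (hB : B ∈ K) (e : S ↪[L] B) (h : B →[L] T) :
    ∃ q : PartialHom L U T, q.dom.FG ∧ p ≤ q ∧ q.Realizes e h := by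
  obtain ⟨q, hqfg, hSq, hpq⟩ := exists_le_and_le_dom hU H2 hp hS
  by_cases hcompat : ∀ x, h (e x) = q.toHom (Substructure.inclusion hSq x)
  swap
  · exact ⟨q, hqfg, hpq, hSq, fun h' => absurd h' hcompat⟩
  obtain ⟨C, hC, g₁, g₂, k, hg, hk₁, hk₂⟩ := H1 (Bundled.mk S) (Bundled.mk q.dom) B
    (mk_mem_of_fg hU hS) (mk_mem_of_fg hU hqfg) hB (Substructure.inclusion hSq) e q.toHom h
    (by ext x; exact (hcompat x).symm)
  obtain ⟨c, hcg⟩ := exists_embedding_comp_eq hU ((fg_iff_structure_fg _).1 hqfg) hC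
    q.dom.subtype g₁
  have hq : q ≤ ofEmbedding c k :=
    le_ofEmbedding g₁ (fun x => congr($hcg x)) fun x => congr($hk₁ x)
  refine ⟨ofEmbedding c k, (fg_of_mem hU hC).range _, hpq.trans hq, hSq.trans hq.1,
    fun _ => ⟨c.equivRange.toEmbedding.comp g₂, fun x => Subtype.ext ?_, fun b => ?_⟩⟩
  · have hgx := congr($hg x)
    simp only [Embedding.comp_apply] at hgx
    show (c.equivRange (g₂ (e x)) : U) = x
    rw [Embedding.equivRange_apply, ← hgx]
    exact congr($hcg (Substructure.inclusion hSq x))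
  · exact (ofEmbedding_apply c k (g₂ b)).trans congr($hk₂ b)

-- Members of `K = age U` are isomorphic to finitely generated substructures of `U`, so countably
-- many extensions suffice.
theorem isRich_of_forall_fg {r : U →[L] T}
    (hr : ∀ (S V : {S : L.Substructure U // S.FG}) (e : S.1 ↪[L] V.1) (h : V.1 →[L] T),
      (∀ x, h (e x) = r x) →
        ∃ j : V.1 ↪[L] U, (∀ x, j (e x) = x) ∧ ∀ b, r (j b) = h b) :
    IsRich K r := by
  intro S hS B hB e h hc
  obtain ⟨-, ⟨j₀⟩⟩ := (hU.age ▸ hB : B ∈ L.age U)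
  let φ := j₀.equivRange
  obtain ⟨j, hje, hjh⟩ := hr ⟨S, hS⟩ ⟨_, (fg_of_mem hU hB).range j₀.toHom⟩
    (φ.toEmbedding.comp e) (h.comp φ.symm.toHom) fun x => by simpa using hc x
  exact ⟨j.comp φ.toEmbedding, hje, fun b => by simpa using hjh (φ b)⟩

theorem nonempty_bot_hom (hT : InBar L K T) : Nonempty ((⊥ : L.Substructure U) →[L] T) := by
  obtain ⟨-, ⟨q⟩⟩ := (hU.age ▸ hT.2 (age.fg_substructure fg_bot) :
    Bundled.mk (⊥ : L.Substructure T) ∈ L.age U)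
  exact ⟨(⊥ : L.Substructure T).subtype.toHom.comp
    (q.equivRange.symm.toHom.comp (Substructure.inclusion bot_le).toHom)⟩

theorem exists_isRich (hT : InBar L K T) (H1 : AmalgamationOver K T)
    (H2 : HomExtensionOver K T) : ∃ r : U →[L] T, IsRich K r := by
  have := hT.1
  have : ∀ S : {S : L.Substructure U // S.FG}, FG L S.1 := fun S => (fg_iff_structure_fg _).1 S.2
  let Task := Σ S V : {S : L.Substructure U // S.FG}, (S.1 ↪[L] V.1) × (V.1 →[L] T)
  let P := {p : PartialHom L U T // p.dom.FG}
  let D : U ⊕ Task → Order.Cofinal P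
    | .inl x => ⟨{p | x ∈ p.1.dom}, fun p => by
        obtain ⟨q, hq, hxq, hpq⟩ :=
          PartialHom.exists_le_and_le_dom hU H2 p.2 (fg_closure_singleton x)
        exact ⟨⟨q, hq⟩, hxq (subset_closure rfl), hpq⟩⟩
    | .inr ⟨S, V, e, h⟩ => ⟨{p | p.1.Realizes e h}, fun p => by
        obtain ⟨q, hq, hpq, hqe⟩ :=
          PartialHom.exists_le_realizes hU H1 H2 p.2 S.2 (mk_mem_of_fg hU V.2) e h
        exact ⟨⟨q, hq⟩, hqe, hpq⟩⟩
  obtain ⟨h₀⟩ := nonempty_bot_hom hU hT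
  let p₀ : P := ⟨⟨⊥, h₀⟩, fg_bot⟩
  have := Encodable.ofCountable (U ⊕ Task)
  let S : ℕ →o PartialHom L U T := ⟨fun n => (Order.sequenceOfCofinals p₀ D n).1,
    fun _ _ h => Order.sequenceOfCofinals.monotone p₀ D h⟩
  have hS : ∀ x, ∃ n, x ∈ (S n).dom :=
    fun x => ⟨_, Order.sequenceOfCofinals.encode_mem p₀ D (.inl x)⟩
  refine ⟨PartialHom.limit S hS, isRich_of_forall_fg hU fun S' V e h => ?_⟩
  exact (Order.sequenceOfCofinals.encode_mem p₀ D (.inr ⟨S', V, e, h⟩)).exists_embedding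
    (PartialHom.limit_apply S hS)

end FraisseLimit

end

end UHomog

open UHomog FirstOrder FirstOrder.Language in
theorem statement6_general
    (L : FirstOrder.Language.{u, v})
    [Countable (Σ l, L.Functions l)]
    (K : Set (Bundled.{w} L.Structure))
    (U : Type w) [L.Structure U] [Countable U] (hU : IsFraisseLimit K U)
    (T : Type w) [L.Structure T] (hT : InBar L K T) :
    (∃ r : U →[L] T, IsRetraction L r ∧ IsUniversalHom L K r ∧ IsHomogeneousHom L r) ↔
      ((∀ A B₁ B₂ : Bundled.{w} L.Structure, A ∈ K → B₁ ∈ K → B₂ ∈ K →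
          ∀ (f₁ : A ↪[L] B₁) (f₂ : A ↪[L] B₂) (h₁ : B₁ →[L] T) (h₂ : B₂ →[L] T),
            h₁.comp f₁.toHom = h₂.comp f₂.toHom →
            ∃ C : Bundled.{w} L.Structure, C ∈ K ∧
              ∃ (g₁ : B₁ ↪[L] C) (g₂ : B₂ ↪[L] C) (h : C →[L] T),
                g₁.comp f₁ = g₂.comp f₂ ∧ h.comp g₁.toHom = h₁ ∧ h.comp g₂.toHom = h₂) ∧
        (∀ A B : Bundled.{w} L.Structure, A ∈ K → B ∈ K →
          ∀ (ι : A ↪[L] B) (h : A →[L] T),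
            ∃ hext : B →[L] T, hext.comp ι.toHom = h)) := by
  constructor
  · rintro ⟨r, -, huniv, hhom⟩
    exact ⟨huniv.amalgamationOver hU hhom, huniv.homExtensionOver hU⟩
  · rintro ⟨H1, H2⟩
    obtain ⟨r, hr⟩ := exists_isRich hU hT H1 H2
    have huniv := hr.isUniversalHom hU
    exact ⟨r, huniv.isRetraction hT, huniv, hr.isHomogeneousHom hU⟩

open UHomog FirstOrder FirstOrder.Language in
/-- Theorem: characterization of the `T ∈ K̄` admitting a universal homogeneous retraction from
the Fraïssé limit `U` of `K`. -/
theorem statement6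
    (L : FirstOrder.Language.{u, v})
    [Countable (Σ l, L.Functions l)] [Countable (Σ l, L.Relations l)]
    (K : Set (Bundled.{w} L.Structure)) (hK : IsFraisse K)
    (U : Type w) [L.Structure U] [Countable U] (hU : IsFraisseLimit K U)
    (T : Type w) [L.Structure T] (hT : InBar L K T) :
    (∃ r : U →[L] T, IsRetraction L r ∧ IsUniversalHom L K r ∧ IsHomogeneousHom L r) ↔
      ((∀ A B₁ B₂ : Bundled.{w} L.Structure, A ∈ K → B₁ ∈ K → B₂ ∈ K →
          ∀ (f₁ : A ↪[L] B₁) (f₂ : A ↪[L] B₂) (h₁ : B₁ →[L] T) (h₂ : B₂ →[L] T),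
            h₁.comp f₁.toHom = h₂.comp f₂.toHom →
            ∃ C : Bundled.{w} L.Structure, C ∈ K ∧
              ∃ (g₁ : B₁ ↪[L] C) (g₂ : B₂ ↪[L] C) (h : C →[L] T),
                g₁.comp f₁ = g₂.comp f₂ ∧ h.comp g₁.toHom = h₁ ∧ h.comp g₂.toHom = h₂) ∧
        (∀ A B : Bundled.{w} L.Structure, A ∈ K → B ∈ K →
          ∀ (ι : A ↪[L] B) (h : A →[L] T),
            ∃ hext : B →[L] T, hext.comp ι.toHom = h)) :=
  statement6_general L K U hU T hT
end

section
/- Let 𝒞 be a Fraïssé class and T ∈ 𝒞̄. If 𝒞 has the amalgamated extension property, then condition (2) implies condition (1), where: (1) for all A,B₁,B₂ ∈ 𝒞, embeddings f₁ : A ↪ B₁, f₂ : A ↪ B₂ and homomorphisms h₁ : B₁ → T, h₂ : B₂ → T with h₁ ∘ f₁ = h₂ ∘ f₂, there exist C ∈ 𝒞, embeddings g₁ : B₁ ↪ C, g₂ : B₂ ↪ C and a homomorphism h : C → T such that g₁ ∘ f₁ = g₂ ∘ f₂, h ∘ g₁ = h₁ and h ∘ g₂ = h₂; and (2) for all A,B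 ∈ 𝒞, every embedding ι : A ↪ B and every homomorphism h : A → T there exists a homomorphism ĥ : B → T with ĥ ∘ ι = h. -/
universe u v w

open FirstOrder FirstOrder.Language CategoryTheory

open UHomog FirstOrder FirstOrder.Language in
/-- Lemma: if `K` has the amalgamated extension property, then the extension condition (2) for
homomorphisms into `T` implies the amalgamation condition (1) over `T`. -/
theorem statement7
    (L : FirstOrder.Language.{u, v})
    [Countable (Σ l, L.Functions l)] [Countable (Σ l, L.Relations l)]
    (K : Set (Bundled.{w} L.Structure)) (hK : IsFraisse K)
    (T : Type w) [L.Structure T] (hT : InBar L K T)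
    (haep : AmalgamatedExtension L K)
    (h2 : ∀ A B : Bundled.{w} L.Structure, A ∈ K → B ∈ K →
      ∀ (ι : A ↪[L] B) (h : A →[L] T),
        ∃ hext : B →[L] T, hext.comp ι.toHom = h) :
    ∀ A B₁ B₂ : Bundled.{w} L.Structure, A ∈ K → B₁ ∈ K → B₂ ∈ K →
      ∀ (f₁ : A ↪[L] B₁) (f₂ : A ↪[L] B₂) (h₁ : B₁ →[L] T) (h₂ : B₂ →[L] T),
        h₁.comp f₁.toHom = h₂.comp f₂.toHom →
        ∃ C : Bundled.{w} L.Structure, C ∈ K ∧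
          ∃ (g₁ : B₁ ↪[L] C) (g₂ : B₂ ↪[L] C) (h : C →[L] T),
            g₁.comp f₁ = g₂.comp f₂ ∧ h.comp g₁.toHom = h₁ ∧ h.comp g₂.toHom = h₂ := by
  intro A B₁ B₂ hA hB₁ hB₂ f₁ f₂ h₁ h₂ hcomm
  set T₀ : L.Substructure T := h₁.range ⊔ h₂.range with hT₀def
  have hT₀fg : T₀.FG := Substructure.FG.sup ((hK.FG B₁ hB₁).range h₁) ((hK.FG B₂ hB₂).range h₂)
  have hT₀mem : (⟨T₀, inferInstance⟩ : Bundled L.Structure) ∈ K := by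
    apply hT.2
    exact ⟨(Substructure.fg_iff_structure_fg T₀).1 hT₀fg, ⟨T₀.subtype⟩⟩
  let h₁' : B₁ →[L] T₀ := h₁.codRestrict T₀
    (fun b => SetLike.le_def.1 le_sup_left (h₁.mem_range_self b))
  let h₂' : B₂ →[L] T₀ := h₂.codRestrict T₀
    (fun b => SetLike.le_def.1 le_sup_right (h₂.mem_range_self b))
  have hcomm' : h₁'.comp f₁.toHom = h₂'.comp f₂.toHom := by
    ext a
    exact DFunLike.congr_fun hcomm a
  obtain ⟨C, T', g₁, g₂, k, h, hC, hT', hsq, he₁, he₂⟩ :=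
    haep A B₁ B₂ ⟨T₀, inferInstance⟩ hA hB₁ hB₂ hT₀mem f₁ f₂ h₁' h₂' hcomm'
  obtain ⟨hext, hextk⟩ := h2 ⟨T₀, inferInstance⟩ T' hT₀mem hT' k T₀.subtype.toHom
  refine ⟨C, hC, g₁, g₂, hext.comp h, hsq, ?_, ?_⟩
  · ext b
    have e1 : h (g₁ b) = k (h₁' b) := DFunLike.congr_fun he₁ b
    have e2 : hext (k (h₁' b)) = (h₁' b : T) := DFunLike.congr_fun hextk (h₁' b)
    simpa [e1, h₁'] using e2
  · ext b
    have e1 : h (g₂ b) = k (h₂' b) := DFunLike.congr_fun he₂ b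
    have e2 : hext (k (h₂' b)) = (h₂' b : T) := DFunLike.congr_fun hextk (h₂' b)
    simpa [e1, h₂'] using e2
end

section
/- Let 𝒞 be a Fraïssé class with Fraïssé limit U and let V, W ∈ 𝒞̄. If r : U ↠ V is a universal homogeneous retraction and s : V ↠ W is any retraction, then there exists a universal homogeneous retraction ŝ : U ↠ W. -/
universe u v w

open FirstOrder FirstOrder.Language CategoryTheory

/-!
Let `ι` be a section of `s`. Restricted to `U₀ = r⁻¹(ι W)`, the map `s ∘ r : U₀ → W` is universal
and homogeneous: lifts along `r` of maps into `ι W` land in `U₀`, and automorphisms of `U` over `r`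
preserve `U₀`. The domain of a universal homogeneous homomorphism into `W` that factors through an
embedding into the Fraïssé limit `U` is again a Fraïssé limit of `K`: a partial isomorphism of `U₀`
is first extended by a point inside `U`, the extension is lifted back into `U₀` over `W` by
universality, and the lift is corrected by homogeneity. Hence `U₀ ≅ U`, transporting along this
isomorphism gives a universal homogeneous `U → W`, and universality applied to `id_W` makes it a
retraction.
-/

namespace UHomog

variable {L : FirstOrder.Language.{u, v}} {K : Set (Bundled.{w} L.Structure)}
variable {U U' V W : Type w} [L.Structure U] [L.Structure U'] [L.Structure V] [L.Structure W]

theorem isHomogeneousHom_iff {u : U →[L] W} :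
    IsHomogeneousHom L u ↔
      ∀ (X : Type w) [L.Structure X], Structure.FG L X → ∀ m₁ m₂ : X ↪[L] U,
        (∀ x, u (m₁ x) = u (m₂ x)) →
          ∃ α : U ≃[L] U, (∀ y, u (α y) = u y) ∧ ∀ x, α (m₁ x) = m₂ x := by
  constructor
  · intro hu X _ hX m₁ m₂ hm
    obtain ⟨α, hαu, hα⟩ := hu m₁.toHom.range (hX.range m₁.toHom)
      (m₂.comp m₁.equivRange.symm.toEmbedding) fun y => by
        obtain ⟨x, rfl⟩ := m₁.equivRange.surjective y
        simp [hm]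
    refine ⟨α, hαu, fun x => ?_⟩
    simpa using hα (m₁.equivRange x)
  · intro hu S hS ι hι
    exact hu S ((Substructure.fg_iff_structure_fg S).1 hS) S.subtype ι (fun x => (hι x).symm)
      |>.imp fun α ⟨hαu, hα⟩ => ⟨hαu, fun x => hα x⟩

theorem IsUniversalHom.comp_equiv {u : U →[L] W} (hu : IsUniversalHom L K u)
    (φ : U' ≃[L] U) : IsUniversalHom L K (u.comp φ.toHom) := by
  intro A hA h
  obtain ⟨ι, hι⟩ := hu A hA h
  exact ⟨φ.symm.toEmbedding.comp ι, fun a => by simp [hι]⟩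

theorem IsHomogeneousHom.comp_equiv {u : U →[L] W} (hu : IsHomogeneousHom L u)
    (φ : U' ≃[L] U) : IsHomogeneousHom L (u.comp φ.toHom) := by
  rw [isHomogeneousHom_iff] at hu ⊢
  intro X _ hX m₁ m₂ hm
  obtain ⟨α, hαu, hα⟩ := hu X hX (φ.toEmbedding.comp m₁) (φ.toEmbedding.comp m₂) hm
  refine ⟨φ.symm.comp (α.comp φ), fun y => ?_, fun x => ?_⟩
  · simp [hαu]
  · simpa using congrArg φ.symm (hα x)

theorem IsUniversalHom.isRetraction_s8 {u : U →[L] W} (hu : IsUniversalHom L K u)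
    (hW : InBar L K W) : IsRetraction L u := by
  obtain ⟨ι, hι⟩ := hu (Bundled.of W) hW (Hom.id L W)
  exact ⟨ι.toHom, hι⟩

def restrictEquiv (α : U ≃[L] U) (S : L.Substructure U) (hS : ∀ x, α x ∈ S ↔ x ∈ S) :
    S ≃[L] S where
  toFun x := ⟨α x, (hS x).2 x.2⟩
  invFun y := ⟨α.symm y, (hS _).1 (by simp [y.2])⟩
  left_inv x := by simp
  right_inv y := by simp
  map_fun' f x := Subtype.ext (α.map_fun f fun i => (x i : U))
  map_rel' r x := α.map_rel r fun i => (x i : U)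

@[simp]
theorem coe_restrictEquiv_apply (α : U ≃[L] U) (S : L.Substructure U)
    (hS : ∀ x, α x ∈ S ↔ x ∈ S) (x : S) : (restrictEquiv α S hS x : U) = α x :=
  rfl

section Restriction

variable (r : U →[L] V) (s : V →[L] W) (ι : W →[L] V) (hι : ∀ w, s (ι w) = w)
include hι

theorem section_comp_apply_of_mem_comap {x : U} (hx : x ∈ ι.range.comap r) :
    ι (s (r x)) = r x := by
  obtain ⟨w, hw⟩ := Substructure.mem_comap.1 hx
  rw [← hw, hι]

theorem isUniversalHom_restrict (hr : IsUniversalHom L K r) :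
    IsUniversalHom L K ((s.comp r).comp (ι.range.comap r).subtype.toHom) := by
  intro A hA h
  obtain ⟨e, he⟩ := hr A hA (ι.comp h)
  have hmem : ∀ a, e a ∈ ι.range.comap r := fun a =>
    Substructure.mem_comap.2 ⟨h a, (he a).symm⟩
  exact ⟨e.codRestrict _ hmem, fun a => by simp [he, hι]⟩

theorem isHomogeneousHom_restrict (hr : IsHomogeneousHom L r) :
    IsHomogeneousHom L ((s.comp r).comp (ι.range.comap r).subtype.toHom) := by
  rw [isHomogeneousHom_iff] at hr ⊢
  intro X _ hX m₁ m₂ hm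
  have hrm : ∀ x, r (m₁ x) = r (m₂ x) := fun x => by
    rw [← section_comp_apply_of_mem_comap r s ι hι (m₁ x).2,
      ← section_comp_apply_of_mem_comap r s ι hι (m₂ x).2]
    exact congrArg ι (hm x)
  obtain ⟨α, hαr, hα⟩ := hr X hX ((ι.range.comap r).subtype.comp m₁)
    ((ι.range.comap r).subtype.comp m₂) hrm
  have hαS : ∀ x, α x ∈ ι.range.comap r ↔ x ∈ ι.range.comap r := fun x => by
    simp only [Substructure.mem_comap, hαr]
  refine ⟨restrictEquiv α _ hαS, fun y => by simp [hαr],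
    fun x => Subtype.ext (hα x)⟩

end Restriction

theorem isFraisseLimit_of_isUniversalHom_of_isHomogeneousHom
    [Countable (Σ l, L.Functions l)] [Countable U] [Countable U'] (hU : IsFraisseLimit K U)
    (j : U' ↪[L] U) (u : U →[L] W) (huniv : IsUniversalHom L K (u.comp j.toHom))
    (hhom : IsHomogeneousHom L (u.comp j.toHom)) : IsFraisseLimit K U' := by
  have inBar_of_embedding : ∀ (B : Type w) [L.Structure B], (B ↪[L] U) → InBar L K B :=
    fun B _ e => ⟨e.injective.countable, hU.age ▸ e.age_subset_age⟩
  refine ⟨?_, ?_⟩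
  · rw [isUltrahomogeneous_iff_IsExtensionPair Structure.cg_of_countable,
      isExtensionPair_iff_exists_embedding_closure_singleton_sup]
    intro S hS f m
    set B := Substructure.closure L {m} ⊔ S
    have : Nonempty (B ↪[L] U) := ⟨j.comp B.subtype⟩
    obtain ⟨g, hg⟩ := hU.ultrahomogeneous.extend_embedding
      ((Substructure.fg_iff_structure_fg S).1 hS) (j.comp f)
      (Substructure.inclusion (le_sup_right : S ≤ B))
    obtain ⟨e, he⟩ := huniv (Bundled.of _) (inBar_of_embedding _ g) (u.comp g.toHom)
    rw [isHomogeneousHom_iff] at hhom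
    obtain ⟨α, -, hα⟩ := hhom S ((Substructure.fg_iff_structure_fg S).1 hS)
      (e.comp (Substructure.inclusion le_sup_right)) f fun x =>
        (he _).trans (congrArg u (DFunLike.congr_fun hg x).symm)
    exact ⟨α.toEmbedding.comp e, Embedding.ext fun x => (hα x).symm⟩
  · refine le_antisymm (hU.age ▸ j.age_subset_age) fun A hA => ?_
    rw [← hU.age] at hA
    obtain ⟨hAfg, ⟨e⟩⟩ := hA
    obtain ⟨ι, -⟩ := huniv A (inBar_of_embedding A e) (u.comp e.toHom)
    exact ⟨hAfg, ⟨ι⟩⟩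

end UHomog

open UHomog FirstOrder FirstOrder.Language in
theorem statement8_general
    (L : FirstOrder.Language.{u, v})
    [Countable (Σ l, L.Functions l)]
    (K : Set (Bundled.{w} L.Structure))
    (U : Type w) [L.Structure U] [Countable U] (hU : IsFraisseLimit K U)
    (V W : Type w) [L.Structure V] [L.Structure W]
    (hW : InBar L K W)
    (r : U →[L] V)
    (hruniv : IsUniversalHom L K r) (hrhom : IsHomogeneousHom L r)
    (s : V →[L] W) (hs : IsRetraction L s) :
    ∃ t : U →[L] W, IsRetraction L t ∧ IsUniversalHom L K t ∧ IsHomogeneousHom L t := by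
  obtain ⟨ι, hι⟩ := hs
  have huniv := isUniversalHom_restrict r s ι hι hruniv
  have hhom := isHomogeneousHom_restrict r s ι hι hrhom
  obtain ⟨φ⟩ := hU.nonempty_equiv
    (isFraisseLimit_of_isUniversalHom_of_isHomogeneousHom hU _ _ huniv hhom)
  exact ⟨_, (huniv.comp_equiv φ).isRetraction_s8 hW, huniv.comp_equiv φ, hhom.comp_equiv φ⟩

open UHomog FirstOrder FirstOrder.Language in
/-- Proposition: if `r : U ↠ V` is a universal homogeneous retraction from the Fraïssé limit `U`
of `K` and `s : V ↠ W` is any retraction, then there is a universal homogeneous retraction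
`ŝ : U ↠ W`. -/
theorem statement8
    (L : FirstOrder.Language.{u, v})
    [Countable (Σ l, L.Functions l)] [Countable (Σ l, L.Relations l)]
    (K : Set (Bundled.{w} L.Structure)) (hK : IsFraisse K)
    (U : Type w) [L.Structure U] [Countable U] (hU : IsFraisseLimit K U)
    (V W : Type w) [L.Structure V] [L.Structure W]
    (hV : InBar L K V) (hW : InBar L K W)
    (r : U →[L] V) (hrret : IsRetraction L r)
    (hruniv : IsUniversalHom L K r) (hrhom : IsHomogeneousHom L r)
    (s : V →[L] W) (hs : IsRetraction L s) :
    ∃ t : U →[L] W, IsRetraction L t ∧ IsUniversalHom L K t ∧ IsHomogeneousHom L t :=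
  statement8_general L K U hU V W hW r hruniv hrhom s hs
end

section
/- Let U be a countable structure that has a universal homogeneous endomorphism. Then U is homogeneous if and only if U is homomorphism homogeneous. -/
universe u v w

open FirstOrder FirstOrder.Language CategoryTheory

namespace UHomog

open FirstOrder FirstOrder.Language in
/-- A structure is homomorphism homogeneous if every homomorphism between finitely generated
substructures extends to an endomorphism. -/
def IsHomomorphismHomogeneous (L : FirstOrder.Language.{u, v}) (M : Type w)
    [L.Structure M] : Prop :=
  ∀ S T : L.Substructure M, S.FG → T.FG → ∀ h : S →[L] T,
    ∃ g : M →[L] M, ∀ s : S, g (s : M) = (h s : M)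

end UHomog

namespace UHomog

open Substructure

variable {L : FirstOrder.Language.{u, v}} {U : Type w} [L.Structure U]

theorem IsUniversalHom.exists_embedding_of_embedding {u : U →[L] U}
    (huniv : IsUniversalHom L (L.age U) u) {A : Type w} [L.Structure A] [Countable A]
    (e : A ↪[L] U) (h : A →[L] U) : ∃ ι : A ↪[L] U, ∀ a, u (ι a) = h a :=
  huniv ⟨A, inferInstance⟩ ⟨inferInstance, e.age_subset_age⟩ h

theorem IsHomogeneousHom.exists_equiv_comp_eq {u : U →[L] U} (hhom : IsHomogeneousHom L u)
    {A : Type*} [L.Structure A] (hA : Structure.FG L A) (e p : A ↪[L] U)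
    (hep : ∀ a, u (e a) = u (p a)) :
    ∃ α : U ≃[L] U, (∀ x, u (α x) = u x) ∧ α.toEmbedding.comp e = p := by
  obtain ⟨α, hαu, hα⟩ := hhom e.toHom.range (hA.range e.toHom)
    (p.comp e.equivRange.symm.toEmbedding) fun r => by
      obtain ⟨a, rfl⟩ := e.equivRange.surjective r
      simp [hep]
  refine ⟨α, hαu, Embedding.ext fun a => ?_⟩
  simpa using hα (e.equivRange a)

theorem IsHomomorphismHomogeneous.exists_hom_extending (hHH : IsHomomorphismHomogeneous L U)
    {S : L.Substructure U} (hS : S.FG) (p : S ↪[L] U) :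
    ∃ g : U →[L] U, ∀ s : S, g s = p s := by
  obtain ⟨g, hg⟩ := hHH S p.toHom.range hS ((S.fg_iff_structure_fg.1 hS).range p.toHom)
    p.equivRange.toHom
  exact ⟨g, fun s => (hg s).trans (p.equivRange_apply s)⟩

/-- The forth step of a back-and-forth argument: map `S'` into `U` by an embedding `ι` lifting
`u ∘ g` for an endomorphism `g` extending `p`; then `ι` and `p` agree on `S` after applying `u`,
so homogeneity of `u` moves `ι` onto `p` by an automorphism. -/
theorem exists_embedding_comp_inclusion_eq [Countable U] {u : U →[L] U}
    (huniv : IsUniversalHom L (L.age U) u) (hhom : IsHomogeneousHom L u)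
    (hHH : IsHomomorphismHomogeneous L U) {S S' : L.Substructure U} (hS : S.FG) (hle : S ≤ S')
    (p : S ↪[L] U) : ∃ q : S' ↪[L] U, q.comp (inclusion hle) = p := by
  obtain ⟨g, hg⟩ := hHH.exists_hom_extending hS p
  obtain ⟨ι, hι⟩ := huniv.exists_embedding_of_embedding S'.subtype
    ((u.comp g).comp S'.subtype.toHom)
  obtain ⟨α, -, hα⟩ := hhom.exists_equiv_comp_eq (S.fg_iff_structure_fg.1 hS)
    (ι.comp (inclusion hle)) p fun s => by simpa [← hg] using hι (inclusion hle s)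
  exact ⟨α.toEmbedding.comp ι, hα⟩

theorem isHomomorphismHomogeneous_of_isUltrahomogeneous [Countable U] {u : U →[L] U}
    (huniv : IsUniversalHom L (L.age U) u) (hU : L.IsUltrahomogeneous U) :
    IsHomomorphismHomogeneous L U := by
  intro S T hS _ h
  obtain ⟨ι, hι⟩ := huniv.exists_embedding_of_embedding S.subtype (T.subtype.toHom.comp h)
  obtain ⟨g, rfl⟩ := hU S hS ι
  exact ⟨u.comp g.toHom, hι⟩

theorem isUltrahomogeneous_of_isHomomorphismHomogeneous [Countable (Σ l, L.Functions l)]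
    [Countable U] {u : U →[L] U} (huniv : IsUniversalHom L (L.age U) u)
    (hhom : IsHomogeneousHom L u) (hHH : IsHomomorphismHomogeneous L U) :
    L.IsUltrahomogeneous U := by
  rw [isUltrahomogeneous_iff_IsExtensionPair (Structure.cg_iff_countable.2 inferInstance)]
  rintro ⟨f, hf⟩ m
  let S := f.dom ⊔ closure L {m}
  have hle : f.dom ≤ S := le_sup_left
  obtain ⟨q, hq⟩ := exists_embedding_comp_inclusion_eq huniv hhom hHH hf hle
    ((subtype f.cod).comp f.toEquiv.toEmbedding)
  refine ⟨⟨⟨S, q.toHom.range, q.equivRange⟩, hf.sup (fg_closure_singleton m)⟩,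
    subset_closure.trans (le_sup_right : _ ≤ S) (Set.mem_singleton m), hle, ?_⟩
  ext x
  simp [← hq]

end UHomog

open UHomog FirstOrder FirstOrder.Language in
theorem statement10_general
    (L : FirstOrder.Language.{u, v})
    [Countable (Σ l, L.Functions l)]
    (U : Type w) [L.Structure U] [Countable U]
    (u : U →[L] U)
    (huniv : IsUniversalHom L (L.age U) u) (hhom : IsHomogeneousHom L u) :
    IsUltrahomogeneous L U ↔ IsHomomorphismHomogeneous L U :=
  ⟨isHomomorphismHomogeneous_of_isUltrahomogeneous huniv,
    isUltrahomogeneous_of_isHomomorphismHomogeneous huniv hhom⟩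

open UHomog FirstOrder FirstOrder.Language in
/-- Proposition: a countable structure with a universal homogeneous endomorphism is homogeneous
if and only if it is homomorphism homogeneous. -/
theorem statement10
    (L : FirstOrder.Language.{u, v})
    [Countable (Σ l, L.Functions l)] [Countable (Σ l, L.Relations l)]
    (U : Type w) [L.Structure U] [Countable U]
    (u : U →[L] U)
    (huniv : IsUniversalHom L (L.age U) u) (hhom : IsHomogeneousHom L u) :
    IsUltrahomogeneous L U ↔ IsHomomorphismHomogeneous L U :=
  statement10_general L U u huniv hhom
end

section
/- Let 𝒞 be a Fraïssé class with Fraïssé limit U such that (1) 𝒞 is closed with respect to finite products, (2) 𝒞 has the homo amalgamation property (HAP), and (3) 𝒞 has the amalgamated extension property. Then rank(Pol U : Emb U) ≤ 2; in particular, Pol U is generated by Emb U together with one unary and one binary polymorphism. -/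
/-!
By the HAP, homomorphisms from members of `K` into `U` extend along embeddings in `K`, and so,
componentwise, do homomorphisms into `U × U`. With the amalgamated extension property (and closure
under products, which puts the finitely generated substructures of `U × U` into `K`) a
back-and-forth construction then yields an embedding `E : U × U ↪ U` with a homomorphic left
inverse `ρ : U → U × U`. Iterating `E` codes `(k+1)`-tuples into single elements, and `ρ` decodes
them homomorphically; so a `(k+1)`-ary polymorphism `p` equals `fst ∘ ρ ∘ σ ∘ E_k`, where
`σ = E ∘ ⟨p ∘ decode, id⟩` is a self-embedding of `U`. Hence `Emb U`, the unary `fst ∘ ρ` and the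
binary `E` generate `Pol U`.
-/

universe u v w

open FirstOrder FirstOrder.Language CategoryTheory

namespace CloneTheory

/-- Finitary operations on `A`: the element `⟨n, f⟩` is an operation of arity `n + 1`
(so all arities are `≥ 1`). -/
def Ops (A : Type w) : Type w := Σ n : ℕ, (Fin (n + 1) → A) → A

/-- `S` is a clone on `A`: it contains all projections and is closed under composition. -/
structure IsClone (A : Type w) (S : Set (Ops A)) : Prop where
  proj : ∀ (n : ℕ) (i : Fin (n + 1)), (⟨n, fun x => x i⟩ : Ops A) ∈ S
  comp : ∀ (n m : ℕ) (f : (Fin (n + 1) → A) → A) (g : Fin (n + 1) → (Fin (m + 1) → A) → A),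
    (⟨n, f⟩ : Ops A) ∈ S → (∀ i, (⟨m, g i⟩ : Ops A) ∈ S) →
    (⟨m, fun x => f fun i => g i x⟩ : Ops A) ∈ S

/-- The clone generated by a set of operations. -/
def cloneGen (A : Type w) (M : Set (Ops A)) : Set (Ops A) :=
  ⋂₀ {S : Set (Ops A) | IsClone A S ∧ M ⊆ S}

/-- The complex product of two sets of operations. -/
def cProd (A : Type w) (U V : Set (Ops A)) : Set (Ops A) :=
  {op | ∃ (n m : ℕ) (f : (Fin (n + 1) → A) → A) (g : Fin (n + 1) → (Fin (m + 1) → A) → A),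
    (⟨n, f⟩ : Ops A) ∈ U ∧ (∀ i, (⟨m, g i⟩ : Ops A) ∈ V) ∧
    op = ⟨m, fun x => f fun i => g i x⟩}

/-- The set `J_A^{(k)}` of projections of arity `k + 1`. -/
def projSet (A : Type w) (k : ℕ) : Set (Ops A) :=
  {op | ∃ i : Fin (k + 1), op = ⟨k, fun x => x i⟩}

/-- The sets `U^{[k,i]}`: operations of arity `k + 1` obtained from `U` by terms of depth
at most `i`. -/
def iter (A : Type w) (U : Set (Ops A)) (k : ℕ) : ℕ → Set (Ops A)
  | 0 => projSet A k
  | i + 1 => cProd A U (iter A U k i) ∪ iter A U k i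

/-- The part of `F` of arity `k + 1`. -/
def arityPart (A : Type w) (F : Set (Ops A)) (k : ℕ) : Set (Ops A) :=
  {op | op ∈ F ∧ op.1 = k}

/-- A clone `F` has the Bergman property if for every generating set `H` and every arity there
is a uniform depth bound generating the whole part of that arity. -/
def BergmanProperty (A : Type w) (F : Set (Ops A)) : Prop :=
  ∀ H : Set (Ops A), H ⊆ F → cloneGen A H = F →
    ∀ k : ℕ, ∃ n : ℕ, iter A H k n = arityPart A F k

/-- A clone `F` has uncountable cofinality: there is no countable increasing chain of proper
subclones of `F` whose union is `F`. -/
def UncountableCofinality (A : Type w) (F : Set (Ops A)) : Prop :=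
  ¬ ∃ c : ℕ → Set (Ops A),
      (∀ n, IsClone A (c n)) ∧ (∀ n, c n ⊆ F) ∧ (∀ n, c n ⊆ c (n + 1)) ∧
      (∀ n, c n ≠ F) ∧ (⋃ n, c n) = F

/-- A clone `F` has uncountable strong cofinality: there is no countable strong cofinal chain
for `F`. -/
def UncountableStrongCofinality (A : Type w) (F : Set (Ops A)) : Prop :=
  ¬ ∃ c : ℕ → Set (Ops A),
      (∀ n, c n ⊆ c (n + 1)) ∧ (∀ n, c n ⊆ F) ∧ (∀ n, c n ≠ F) ∧ (⋃ n, c n) = F ∧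
      (∃ k₀ : ℕ, ∀ n, ∀ k, k₀ ≤ k → arityPart A (c n) k ≠ arityPart A F k) ∧
      (∀ n, ∃ m, ∀ k, iter A (c n) k 2 ⊆ c m)

/-- A clone is finitely generated if it is generated by a finite set. -/
def FinitelyGeneratedClone (A : Type w) (F : Set (Ops A)) : Prop :=
  ∃ H : Set (Ops A), H.Finite ∧ H ⊆ F ∧ cloneGen A H = F

end CloneTheory

namespace CloneTheory

open FirstOrder FirstOrder.Language

/-- The product (power) structure on `ι → M`. -/
instance piStructure (L : FirstOrder.Language.{u, v}) (ι : Type*) (M : Type w)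
    [L.Structure M] : L.Structure (ι → M) where
  funMap f x i := Structure.funMap f fun j => x j i
  RelMap r x := ∀ i, Structure.RelMap r fun j => x j i

/-- The product structure on `M × N`. -/
instance prodStructure (L : FirstOrder.Language.{u, v}) (M N : Type w)
    [L.Structure M] [L.Structure N] : L.Structure (M × N) where
  funMap f x := (Structure.funMap f fun i => (x i).1, Structure.funMap f fun i => (x i).2)
  RelMap r x := Structure.RelMap r (fun i => (x i).1) ∧ Structure.RelMap r fun i => (x i).2

/-- The polymorphism clone of a structure `M`. -/
def PolSet (L : FirstOrder.Language.{u, v}) (M : Type w) [L.Structure M] : Set (Ops M) :=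
  {op | ∃ h : (Fin (op.1 + 1) → M) →[L] M, ⇑h = op.2}

/-- An endomorphism of `M`, viewed as a unary operation. -/
def homOp (L : FirstOrder.Language.{u, v}) (M : Type w) [L.Structure M] (e : M →[L] M) :
    Ops M := ⟨0, fun x => e (x 0)⟩

/-- The self-embedding monoid of `M`, viewed as a set of unary operations. -/
def EmbOps (L : FirstOrder.Language.{u, v}) (M : Type w) [L.Structure M] : Set (Ops M) :=
  {op | ∃ e : M ↪[L] M, op = homOp L M e.toHom}

end CloneTheory

namespace CloneTheory

open FirstOrder FirstOrder.Language

section ProductHoms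

variable {L : FirstOrder.Language.{u, v}} {P M N : Type w}
  [L.Structure P] [L.Structure M] [L.Structure N]

def fstHom : (M × N) →[L] M where
  toFun := Prod.fst
  map_fun' _ _ := rfl
  map_rel' _ _ h := h.1

@[simp] theorem fstHom_apply (x : M × N) : fstHom (L := L) x = x.1 := rfl

def sndHom : (M × N) →[L] N where
  toFun := Prod.snd
  map_fun' _ _ := rfl
  map_rel' _ _ h := h.2

@[simp] theorem sndHom_apply (x : M × N) : sndHom (L := L) x = x.2 := rfl

def pairHom (f : P →[L] M) (g : P →[L] N) : P →[L] (M × N) where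
  toFun x := (f x, g x)
  map_fun' F x := Prod.ext (f.map_fun F x) (g.map_fun F x)
  map_rel' r x h := ⟨f.map_rel r x h, g.map_rel r x h⟩

def piHom {ι : Type*} (f : ι → (P →[L] M)) : P →[L] (ι → M) where
  toFun x i := f i x
  map_fun' F x := funext fun i => (f i).map_fun F x
  map_rel' r x h i := (f i).map_rel r x h

@[simp] theorem piHom_apply {ι : Type*} (f : ι → (P →[L] M)) (x : P) (i : ι) :
    piHom f x i = f i x := rfl

def evalHom {ι : Type*} (i : ι) : (ι → M) →[L] M where
  toFun x := x i
  map_fun' _ _ := rfl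
  map_rel' _ _ h := h i

@[simp] theorem evalHom_apply {ι : Type*} (i : ι) (x : ι → M) : evalHom (L := L) i x = x i := rfl

def graphEmbedding (f : M →[L] N) : M ↪[L] (N × M) where
  toFun x := (f x, x)
  inj' _ _ h := congrArg Prod.snd h
  map_fun' F x := Prod.ext (f.map_fun F x) rfl
  map_rel' r x := ⟨And.right, fun h => ⟨f.map_rel r x h, h⟩⟩

@[simp] theorem graphEmbedding_apply (f : M →[L] N) (x : M) : graphEmbedding f x = (f x, x) := rfl

end ProductHoms

section Clones

variable {A : Type w}

theorem subset_cloneGen (G : Set (Ops A)) : G ⊆ cloneGen A G :=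
  fun _ hop _ ⟨_, hGS⟩ => hGS hop

theorem cloneGen_eq {F G : Set (Ops A)} (hF : IsClone A F) (hGF : G ⊆ F)
    (hmin : ∀ S, IsClone A S → G ⊆ S → F ⊆ S) : cloneGen A G = F :=
  Set.Subset.antisymm (Set.sInter_subset_of_mem (t := F) ⟨hF, hGF⟩)
    fun _ hop _ ⟨hS, hGS⟩ => hmin _ hS hGS hop

theorem IsClone.comp_unary {S : Set (Ops A)} (hS : IsClone A S) {u : A → A} {k : ℕ}
    {f : (Fin (k + 1) → A) → A} (hu : (⟨0, fun x => u (x 0)⟩ : Ops A) ∈ S)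
    (hf : (⟨k, f⟩ : Ops A) ∈ S) : (⟨k, fun x => u (f x)⟩ : Ops A) ∈ S :=
  hS.comp 0 k _ (fun _ => f) hu fun _ => hf

def encodeTuple (E : A × A → A) : ∀ k, (Fin (k + 1) → A) → A
  | 0 => fun x => x 0
  | k + 1 => fun x => E (encodeTuple E k (Fin.init x), x (Fin.last (k + 1)))

theorem IsClone.encodeTuple_mem {S : Set (Ops A)} (hS : IsClone A S) {E : A × A → A}
    (hE : (⟨1, fun x => E (x 0, x 1)⟩ : Ops A) ∈ S) (k : ℕ) :
    (⟨k, encodeTuple E k⟩ : Ops A) ∈ S := by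
  induction k with
  | zero => exact hS.proj 0 0
  | succ k ih =>
    have hinit : (⟨k + 1, fun x => encodeTuple E k (Fin.init x)⟩ : Ops A) ∈ S :=
      hS.comp k (k + 1) _ (fun i x => x i.castSucc) ih fun i => hS.proj _ _
    refine hS.comp 1 (k + 1) _ ![_, fun x => x (Fin.last (k + 1))] hE fun i => ?_
    fin_cases i
    · exact hinit
    · exact hS.proj _ _

end Clones

section Polymorphisms

variable {L : FirstOrder.Language.{u, v}} {M : Type w} [L.Structure M]

theorem isClone_polSet : IsClone M (PolSet L M) where
  proj _ i := ⟨evalHom i, rfl⟩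
  comp n m f g := by
    rintro ⟨p, hp⟩ hg
    choose q hq using hg
    refine ⟨p.comp (piHom q), funext fun x => ?_⟩
    change p (fun i => q i x) = f fun i => g i x
    exact (congrFun hp _).trans (congrArg f (funext fun i => congrFun (hq i) x))

theorem mem_polSet {op : Ops M} :
    op ∈ PolSet L M ↔ ∃ (k : ℕ) (p : (Fin (k + 1) → M) →[L] M), op = ⟨k, p⟩ := by
  refine ⟨fun ⟨p, hp⟩ => ⟨op.1, p, by rw [hp]; rfl⟩, ?_⟩
  rintro ⟨k, p, rfl⟩
  exact ⟨p, rfl⟩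

theorem embOps_subset_polSet : EmbOps L M ⊆ PolSet L M := by
  rintro _ ⟨e, rfl⟩
  exact ⟨e.toHom.comp (evalHom 0), rfl⟩

def decodeTuple (ρ : M →[L] (M × M)) : ∀ k, M →[L] (Fin (k + 1) → M)
  | 0 => piHom fun _ => Hom.id L M
  | k + 1 => piHom <| Fin.lastCases (sndHom.comp ρ) fun j =>
      (evalHom j).comp ((decodeTuple ρ k).comp (fstHom.comp ρ))

theorem decodeTuple_encodeTuple {E : (M × M) → M} {ρ : M →[L] (M × M)}
    (hρ : ∀ x, ρ (E x) = x) (k : ℕ) (x : Fin (k + 1) → M) :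
    decodeTuple ρ k (encodeTuple E k x) = x := by
  induction k with
  | zero => funext i; fin_cases i; rfl
  | succ k ih =>
    funext i
    refine Fin.lastCases ?_ (fun j => ?_) i
    · simp [decodeTuple, encodeTuple, hρ]
    · simp [decodeTuple, encodeTuple, hρ, ih, Fin.init]

theorem cloneGen_embOps_union_eq_polSet (E : (M × M) ↪[L] M) (ρ : M →[L] (M × M))
    (hρ : ∀ x, ρ (E x) = x) :
    cloneGen M (EmbOps L M ∪ {homOp L M (fstHom.comp ρ), ⟨1, fun x => E (x 0, x 1)⟩}) =
      PolSet L M := by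
  refine cloneGen_eq isClone_polSet (Set.union_subset embOps_subset_polSet ?_) ?_
  · rintro _ (rfl | rfl)
    · exact ⟨(fstHom.comp ρ).comp (evalHom 0), rfl⟩
    · exact ⟨E.toHom.comp (pairHom (evalHom 0) (evalHom 1)), rfl⟩
  intro S hS hgen op hop
  obtain ⟨k, p, rfl⟩ := mem_polSet.1 hop
  let σ : M ↪[L] M := E.comp (graphEmbedding (p.comp (decodeTuple ρ k)))
  have hσ : homOp L M σ.toHom ∈ S := hgen (Or.inl ⟨σ, rfl⟩)
  have hfst : homOp L M (fstHom.comp ρ) ∈ S := hgen (Or.inr (Or.inl rfl))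
  have hE : (⟨1, fun x => E (x 0, x 1)⟩ : Ops M) ∈ S := hgen (Or.inr (Or.inr rfl))
  have hp : ⇑p = fun x => (fstHom.comp ρ) (σ (encodeTuple E k x)) := by
    funext x
    simp [σ, hρ, decodeTuple_encodeTuple hρ]
  rw [hp]
  exact hS.comp_unary hfst (hS.comp_unary hσ (hS.encodeTuple_mem hE k))

end Polymorphisms

end CloneTheory

namespace UHomog

open FirstOrder FirstOrder.Language CloneTheory

section Chains

variable {L : FirstOrder.Language.{u, v}} {M N : Type*} [L.Structure M]
  {S : ℕ → L.Substructure M}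

theorem exists_stage_comp_eq (hS : Monotone S) (hcover : ∀ x, ∃ n, x ∈ S n) {g : M → N}
    {f : ∀ n, S n → N} (hg : ∀ n (x : S n), g x = f n x) {k : ℕ} (xs : Fin k → M) :
    ∃ n, ∃ hn : ∀ i, xs i ∈ S n, g ∘ xs = f n ∘ fun i => ⟨xs i, hn i⟩ := by
  choose ν hν using fun i => hcover (xs i)
  obtain ⟨n, hn⟩ := Finite.exists_le ν
  have hmem : ∀ i, xs i ∈ S n := fun i => hS (hn i) (hν i)
  exact ⟨n, hmem, funext fun i => hg n ⟨xs i, hmem i⟩⟩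

variable [L.Structure N]

theorem exists_hom_of_chain (hS : Monotone S) (hcover : ∀ x, ∃ n, x ∈ S n)
    (f : ∀ n, S n →[L] N)
    (hf : ∀ m n (h : m ≤ n) (x : S m), f n (Substructure.inclusion (hS h) x) = f m x) :
    ∃ g : M →[L] N, ∀ n (x : S n), g x = f n x := by
  choose ν hν using hcover
  let φ : M → N := fun x => f (ν x) ⟨x, hν x⟩
  have hφ : ∀ n (x : S n), φ x = f n x := fun n x => by
    rcases le_total (ν x) n with h | h
    · exact (hf _ _ h _).symm
    · exact hf _ _ h x
  refine ⟨⟨φ, fun F xs => ?_, fun r xs hr => ?_⟩, hφ⟩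
  all_goals obtain ⟨n, hn, hxs⟩ := exists_stage_comp_eq hS (fun x => ⟨_, hν x⟩) hφ xs
  · rw [hxs, ← (f n).map_fun]
    exact hφ n ⟨_, (S n).fun_mem F xs hn⟩
  · rw [hxs]
    exact (f n).map_rel r _ hr

theorem exists_embedding_of_chain (hS : Monotone S) (hcover : ∀ x, ∃ n, x ∈ S n)
    (f : ∀ n, S n ↪[L] N)
    (hf : ∀ m n (h : m ≤ n) (x : S m), f n (Substructure.inclusion (hS h) x) = f m x) :
    ∃ g : M ↪[L] N, ∀ n (x : S n), g x = f n x := by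
  obtain ⟨g, hg⟩ := exists_hom_of_chain hS hcover (fun n => (f n).toHom) hf
  refine ⟨⟨⟨g, fun x y hxy => ?_⟩, g.map_fun', fun r xs => ?_⟩, hg⟩
  · obtain ⟨n, hn, hxs⟩ := exists_stage_comp_eq hS hcover hg ![x, y]
    have hfxy : f n ⟨x, hn 0⟩ = f n ⟨y, hn 1⟩ :=
      (congrFun hxs 0).symm.trans (hxy.trans (congrFun hxs 1))
    exact congrArg Subtype.val ((f n).injective hfxy)
  · obtain ⟨n, hn, hxs⟩ := exists_stage_comp_eq hS hcover hg xs
    change Structure.RelMap r (g ∘ xs) ↔ _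
    rw [hxs]
    exact (f n).map_rel r _

end Chains

theorem exists_hom_range_comp {L : FirstOrder.Language.{u, v}} {C M N : Type*}
    [L.Structure C] [L.Structure M] [L.Structure N] (δ : C ↪[L] M) (φ : C →[L] N) :
    ∃ ψ : δ.toHom.range →[L] N, ∀ c, ψ ⟨δ c, δ.toHom.mem_range_self c⟩ = φ c :=
  ⟨φ.comp δ.equivRange.symm.toHom, fun c => congrArg φ (δ.equivRange.symm_apply_apply c)⟩

variable {L : FirstOrder.Language.{u, v}} {K : Set (Bundled.{w} L.Structure)}

def HomExtensionProperty (K : Set (Bundled.{w} L.Structure)) (M : Type w) [L.Structure M] :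
    Prop :=
  ∀ ⦃T C : Bundled.{w} L.Structure⦄, T ∈ K → C ∈ K → ∀ (k : T ↪[L] C) (q : T →[L] M),
    ∃ ε : C →[L] M, ∀ t, ε (k t) = q t

theorem HomExtensionProperty.prod {M N : Type w} [L.Structure M] [L.Structure N]
    (hM : HomExtensionProperty K M) (hN : HomExtensionProperty K N) :
    HomExtensionProperty K (M × N) := fun T C hT hC k q => by
  obtain ⟨ε₁, hε₁⟩ := hM hT hC k (fstHom.comp q)
  obtain ⟨ε₂, hε₂⟩ := hN hT hC k (sndHom.comp q)
  exact ⟨pairHom ε₁ ε₂, fun t => Prod.ext (hε₁ t) (hε₂ t)⟩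

end UHomog

namespace FirstOrder.Language.IsFraisseLimit

open UHomog CloneTheory

variable {L : FirstOrder.Language.{u, v}} {K : Set (Bundled.{w} L.Structure)}
  [Countable (Σ l, L.Functions l)] {U : Type w} [L.Structure U] [Countable U]

theorem mem_of_fg (hU : IsFraisseLimit K U) {S : L.Substructure U} (hS : S.FG) :
    (Bundled.of S : Bundled.{w} L.Structure) ∈ K :=
  hU.age ▸ age.fg_substructure hS

theorem fg_of_mem (hU : IsFraisseLimit K U) {C : Bundled.{w} L.Structure} (hC : C ∈ K) :
    Structure.FG L C :=
  (hU.age ▸ hC : C ∈ L.age U).1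

theorem exists_embedding_extend (hU : IsFraisseLimit K U)
    {S : L.Substructure U} (hS : S.FG) {C : Bundled.{w} L.Structure} (hC : C ∈ K)
    (β : S ↪[L] C) : ∃ δ : C ↪[L] U, ∀ s, δ (β s) = s := by
  have : Nonempty (C ↪[L] U) := (hU.age ▸ hC : C ∈ L.age U).2
  obtain ⟨δ, hδ⟩ := hU.ultrahomogeneous.extend_embedding (S.fg_iff_structure_fg.1 hS) S.subtype β
  exact ⟨δ, fun s => (congrFun (congrArg DFunLike.coe hδ) s).symm⟩

/-- HAP moves the image of `q` into an amalgam `C'` of `C` and `range q`, and the extension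
property of `U` embeds `C'` back into `U` over `range q`. -/
theorem homExtensionProperty (hU : IsFraisseLimit K U) (hhap : HAP L K) :
    HomExtensionProperty K U := fun T C hT hC k q => by
  have hR : q.range.FG := (hU.fg_of_mem hT).range q
  let q' : T →[L] q.range := q.codRestrict _ q.mem_range_self
  obtain ⟨C', g₁, g₂, hC', hcomm⟩ := hhap T C (Bundled.of q.range) hT hC (hU.mem_of_fg hR) k q'
  obtain ⟨δ, hδ⟩ := hU.exists_embedding_extend hR hC' g₂
  refine ⟨δ.toHom.comp g₁, fun t => ?_⟩
  change δ (g₁ (k t)) = q t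
  rw [show g₁ (k t) = g₂ (q' t) from congrFun (congrArg DFunLike.coe hcomm) t]
  exact hδ (q' t)

theorem age_prod_subset (hU : IsFraisseLimit K U)
    (hprod : ∀ A B : Bundled.{w} L.Structure, A ∈ K → B ∈ K →
      (Bundled.of (↥A × ↥B) : Bundled.{w} L.Structure) ∈ K) :
    L.age (U × U) ⊆ K := by
  rintro N ⟨hN, ⟨m⟩⟩
  let P₁ := (fstHom.comp m.toHom).range
  let P₂ := (sndHom.comp m.toHom).range
  have hP : (Bundled.of (P₁ × P₂) : Bundled.{w} L.Structure) ∈ K :=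
    hprod (Bundled.of P₁) (Bundled.of P₂) (hU.mem_of_fg (hN.range _)) (hU.mem_of_fg (hN.range _))
  let m' : N ↪[L] P₁ × P₂ :=
    { toFun := fun x => (⟨(m x).1, x, rfl⟩, ⟨(m x).2, x, rfl⟩)
      inj' := fun x y hxy => m.injective (Prod.ext (congrArg (fun p => (p.1 : U)) hxy)
        (congrArg (fun p => (p.2 : U)) hxy))
      map_fun' := fun F x => Prod.ext (Subtype.ext (congrArg Prod.fst (m.map_fun F x)))
        (Subtype.ext (congrArg Prod.snd (m.map_fun F x)))
      map_rel' := fun r x => m.map_rel r x }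
  rw [← hU.age] at hP ⊢
  exact age.hereditary U _ hP ⟨hN, ⟨m'⟩⟩

end FirstOrder.Language.IsFraisseLimit

namespace UHomog

open FirstOrder FirstOrder.Language

/-- A finite approximation of an embedding `U × U ↪ U` together with a left inverse
`U → U × U` of it. -/
structure PartialRetract (L : FirstOrder.Language.{u, v}) (U : Type w) [L.Structure U] where
  embDom : L.Substructure (U × U)
  retDom : L.Substructure U
  embDom_fg : embDom.FG
  retDom_fg : retDom.FG
  emb : embDom ↪[L] U
  ret : retDom →[L] U × U
  emb_mem : ∀ a, emb a ∈ retDom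
  ret_emb : ∀ a, ret ⟨emb a, emb_mem a⟩ = a

namespace PartialRetract

variable {L : FirstOrder.Language.{u, v}} {U : Type w} [L.Structure U]

instance : Preorder (PartialRetract L U) where
  le c c' := ∃ (hA : c.embDom ≤ c'.embDom) (hD : c.retDom ≤ c'.retDom),
    (∀ a, c'.emb (Substructure.inclusion hA a) = c.emb a) ∧
      ∀ d, c'.ret (Substructure.inclusion hD d) = c.ret d
  le_refl _ := ⟨le_rfl, le_rfl, fun _ => rfl, fun _ => rfl⟩
  le_trans _ _ _ := by
    rintro ⟨hA, hD, he, hr⟩ ⟨hA', hD', he', hr'⟩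
    exact ⟨hA.trans hA', hD.trans hD', fun a => (he' _).trans (he a),
      fun d => (hr' _).trans (hr d)⟩

theorem embDom_mono : Monotone (embDom : PartialRetract L U → _) := fun _ _ h => h.fst

theorem retDom_mono : Monotone (retDom : PartialRetract L U → _) := fun _ _ h => h.snd.fst

theorem emb_inclusion {c c' : PartialRetract L U} (h : c ≤ c') (a : c.embDom) :
    c'.emb (Substructure.inclusion (embDom_mono h) a) = c.emb a :=
  h.snd.snd.1 a

theorem ret_inclusion {c c' : PartialRetract L U} (h : c ≤ c') (d : c.retDom) :
    c'.ret (Substructure.inclusion (retDom_mono h) d) = c.ret d :=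
  h.snd.snd.2 d

variable [Countable (Σ l, L.Functions l)] [Countable U] {K : Set (Bundled.{w} L.Structure)}

theorem nonempty (hU : IsFraisseLimit K U) (hV : L.age (U × U) ⊆ K) :
    Nonempty (PartialRetract L U) := by
  have hbot : (⊥ : L.Substructure (U × U)).FG := Substructure.fg_bot
  have hbotK : (Bundled.of (⊥ : L.Substructure (U × U)) : Bundled.{w} L.Structure) ∈ K :=
    hV (age.fg_substructure hbot)
  obtain ⟨j⟩ := (hU.age ▸ hbotK : _ ∈ L.age U).2
  obtain ⟨ψ, hψ⟩ := exists_hom_range_comp j (⊥ : L.Substructure (U × U)).subtype.toHom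
  exact ⟨⟨⊥, j.toHom.range, hbot, (hU.fg_of_mem hbotK).range _, j, ψ,
    j.toHom.mem_range_self, hψ⟩⟩

theorem isCofinal_mem_retDom (hU : IsFraisseLimit K U) (hext : HomExtensionProperty K (U × U))
    (d : U) : IsCofinal {c : PartialRetract L U | d ∈ c.retDom} := fun c => by
  let D := c.retDom ⊔ Substructure.closure L {d}
  have hD : D.FG := c.retDom_fg.sup (Substructure.fg_closure_singleton d)
  obtain ⟨r, hr⟩ := hext (hU.mem_of_fg c.retDom_fg) (hU.mem_of_fg hD)
    (Substructure.inclusion le_sup_left) c.ret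
  exact ⟨⟨c.embDom, D, c.embDom_fg, hD, c.emb, r,
      fun a => (le_sup_left : c.retDom ≤ D) (c.emb_mem a), fun a => (hr _).trans (c.ret_emb a)⟩,
    (le_sup_right : _ ≤ D) (Substructure.subset_closure rfl), le_rfl, le_sup_left, fun _ => rfl, hr⟩

/-- Amalgamate `emb : embDom ↪ retDom` with `embDom ⊆ A` over `ret`, using the amalgamated
extension property, and embed the amalgam back into `U` over `retDom`. -/
theorem exists_le_and_le_embDom (hU : IsFraisseLimit K U) (hV : L.age (U × U) ⊆ K)
    (hext : HomExtensionProperty K (U × U)) (haep : AmalgamatedExtension L K)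
    (c : PartialRetract L U) {A : L.Substructure (U × U)} (hA : A.FG) (hle : c.embDom ≤ A) :
    ∃ c', c ≤ c' ∧ A ≤ c'.embDom := by
  have mem : ∀ {S : L.Substructure (U × U)}, S.FG →
      (Bundled.of S : Bundled.{w} L.Structure) ∈ K :=
    fun hS => hV (age.fg_substructure hS)
  let T := c.ret.range ⊔ A
  have hT : T.FG := ((c.retDom.fg_iff_structure_fg.1 c.retDom_fg).range c.ret).sup hA
  let f₁ : c.embDom ↪[L] c.retDom := c.emb.codRestrict _ c.emb_mem
  let f₂ : c.embDom ↪[L] A := Substructure.inclusion hle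
  let h₁ : c.retDom →[L] T :=
    c.ret.codRestrict T fun d => (le_sup_left : _ ≤ T) (c.ret.mem_range_self d)
  let h₂ : A →[L] T := (Substructure.inclusion le_sup_right).toHom
  obtain ⟨C, T', g₁, g₂, k, h, hC, hT', hg, hh₁, hh₂⟩ :=
    haep _ _ _ _ (mem c.embDom_fg) (hU.mem_of_fg c.retDom_fg) (mem hA) (mem hT) f₁ f₂ h₁ h₂
      (Hom.ext fun a => Subtype.ext (c.ret_emb a))
  obtain ⟨δ, hδ⟩ := hU.exists_embedding_extend c.retDom_fg hC g₁
  obtain ⟨ε, hε⟩ := hext (mem hT) hT' k T.subtype.toHom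
  obtain ⟨r, hr⟩ := exists_hom_range_comp δ (ε.comp h)
  have hD : c.retDom ≤ δ.toHom.range := fun d hd => ⟨g₁ ⟨d, hd⟩, hδ ⟨d, hd⟩⟩
  refine ⟨⟨A, δ.toHom.range, hA, (hU.fg_of_mem hC).range _, δ.comp g₂, r,
      fun a => δ.toHom.mem_range_self _, fun a => ?_⟩, ⟨hle, hD, fun a => ?_, fun d => ?_⟩, le_rfl⟩
  · exact (hr _).trans ((congrArg ε (DFunLike.congr_fun hh₂ a)).trans (hε (h₂ a)))
  · exact (congrArg δ (DFunLike.congr_fun hg a)).symm.trans (hδ (f₁ a))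
  · rw [show Substructure.inclusion hD d = ⟨δ (g₁ d), _⟩ from Subtype.ext (hδ d).symm]
    exact (hr _).trans ((congrArg ε (DFunLike.congr_fun hh₁ d)).trans (hε (h₁ d)))

theorem isCofinal_mem_embDom (hU : IsFraisseLimit K U) (hV : L.age (U × U) ⊆ K)
    (hext : HomExtensionProperty K (U × U)) (haep : AmalgamatedExtension L K) (x : U × U) :
    IsCofinal {c : PartialRetract L U | x ∈ c.embDom} := fun c => by
  obtain ⟨c', hc', hA⟩ := exists_le_and_le_embDom hU hV hext haep c
    (c.embDom_fg.sup (Substructure.fg_closure_singleton x)) le_sup_left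
  exact ⟨c', hA ((le_sup_right : _ ≤ c.embDom ⊔ _) (Substructure.subset_closure rfl)), hc'⟩

end PartialRetract

variable {L : FirstOrder.Language.{u, v}} [Countable (Σ l, L.Functions l)]
  {K : Set (Bundled.{w} L.Structure)} {U : Type w} [L.Structure U] [Countable U]

theorem exists_embedding_prod_retraction (hU : IsFraisseLimit K U)
    (hV : L.age (U × U) ⊆ K) (hext : HomExtensionProperty K (U × U))
    (haep : AmalgamatedExtension L K) :
    ∃ (E : (U × U) ↪[L] U) (ρ : U →[L] (U × U)), ∀ x, ρ (E x) = x := by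
  have : Encodable ((U × U) ⊕ U) := Encodable.ofCountable _
  obtain ⟨c₀⟩ := PartialRetract.nonempty hU hV
  let cofinals : (U × U) ⊕ U → Order.Cofinal (PartialRetract L U) :=
    Sum.elim (fun x => ⟨_, PartialRetract.isCofinal_mem_embDom hU hV hext haep x⟩)
      (fun d => ⟨_, PartialRetract.isCofinal_mem_retDom hU hext d⟩)
  let c := Order.sequenceOfCofinals c₀ cofinals
  have hc : Monotone c := Order.sequenceOfCofinals.monotone c₀ cofinals
  have hA : ∀ x, ∃ n, x ∈ (c n).embDom :=
    fun x => ⟨_, Order.sequenceOfCofinals.encode_mem c₀ cofinals (.inl x)⟩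
  have hD : ∀ d, ∃ n, d ∈ (c n).retDom :=
    fun d => ⟨_, Order.sequenceOfCofinals.encode_mem c₀ cofinals (.inr d)⟩
  obtain ⟨E, hE⟩ := exists_embedding_of_chain (PartialRetract.embDom_mono.comp hc) hA
    (fun n => (c n).emb) fun _ _ h => PartialRetract.emb_inclusion (hc h)
  obtain ⟨ρ, hρ⟩ := exists_hom_of_chain (PartialRetract.retDom_mono.comp hc) hD
    (fun n => (c n).ret) fun _ _ h => PartialRetract.ret_inclusion (hc h)
  refine ⟨E, ρ, fun x => ?_⟩
  obtain ⟨n, hx⟩ := hA x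
  rw [hE n ⟨x, hx⟩, hρ n ⟨_, (c n).emb_mem _⟩]
  exact (c n).ret_emb _

end UHomog

open UHomog CloneTheory FirstOrder FirstOrder.Language in
theorem statement13_general
    (L : FirstOrder.Language.{u, v})
    [Countable (Σ l, L.Functions l)]
    (K : Set (Bundled.{w} L.Structure))
    (U : Type w) [L.Structure U] [Countable U] (hU : IsFraisseLimit K U)
    (hprod : ∀ A B : Bundled.{w} L.Structure, A ∈ K → B ∈ K →
      (Bundled.of (↥A × ↥B) : Bundled.{w} L.Structure) ∈ K)
    (hhap : HAP L K) (haep : AmalgamatedExtension L K) :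
    ∃ f g : Ops U, f ∈ PolSet L U ∧ g ∈ PolSet L U ∧ f.1 = 0 ∧ g.1 = 1 ∧
      cloneGen U (EmbOps L U ∪ {f, g}) = PolSet L U := by
  have hext := hU.homExtensionProperty hhap
  obtain ⟨E, ρ, hρ⟩ :=
    exists_embedding_prod_retraction hU (hU.age_prod_subset hprod) (hext.prod hext) haep
  have hgen := cloneGen_embOps_union_eq_polSet E ρ hρ
  exact ⟨_, _, hgen ▸ subset_cloneGen _ (Or.inr (Or.inl rfl)),
    hgen ▸ subset_cloneGen _ (Or.inr (Or.inr rfl)), rfl, rfl, hgen⟩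

open UHomog CloneTheory FirstOrder FirstOrder.Language in
/-- Theorem: if the Fraïssé class `K` is closed under finite products and has the HAP and the
amalgamated extension property, then `rank(Pol U : Emb U) ≤ 2`: the polymorphism clone of the
Fraïssé limit `U` is generated by `Emb U` together with one unary and one binary polymorphism. -/
theorem statement13
    (L : FirstOrder.Language.{u, v})
    [Countable (Σ l, L.Functions l)] [Countable (Σ l, L.Relations l)]
    (K : Set (Bundled.{w} L.Structure)) (hK : IsFraisse K)
    (U : Type w) [L.Structure U] [Countable U] (hU : IsFraisseLimit K U)
    (hprod : ∀ A B : Bundled.{w} L.Structure, A ∈ K → B ∈ K →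
      (Bundled.of (↥A × ↥B) : Bundled.{w} L.Structure) ∈ K)
    (hhap : HAP L K) (haep : AmalgamatedExtension L K) :
    ∃ f g : Ops U, f ∈ PolSet L U ∧ g ∈ PolSet L U ∧ f.1 = 0 ∧ g.1 = 1 ∧
      cloneGen U (EmbOps L U ∪ {f, g}) = PolSet L U :=
  statement13_general L K U hU hprod hhap haep
end
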